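/- arXiv:2301.02495 — 10 statements merged into one kernel-verified Lean document; each statement's English description precedes it below -/
import Mathlib

section
/- Let u, v : ℝ×ℝ → ℝ be smooth functions of (x,t), and set m = u − u_xx, n = v − v_xx. Then the zero-curvature equation U(λ)_t − V(λ)_x + U(λ)V(λ) − V(λ)U(λ) = 0 holds for every real λ ≠ 0 if and only if (u,v) satisfies the Geng–Xue system. -/
open Matrix

/-- Partial derivative with respect to the first variable. -/
noncomputable def pdx (f : ℝ → ℝ → ℝ) : ℝ → ℝ → ℝ := fun x t => deriv (fun x' => f x' t) x

/-- Partial derivative with respect to the second variable. -/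
noncomputable def pdt (f : ℝ → ℝ → ℝ) : ℝ → ℝ → ℝ := fun x t => deriv (fun t' => f x t') t

/-- Smoothness of a function of two real variables. -/
def Smooth2 (f : ℝ → ℝ → ℝ) : Prop := ContDiff ℝ (⊤ : ℕ∞) (Function.uncurry f)

/-- `m = u - u_xx`. -/
noncomputable def mDef (u : ℝ → ℝ → ℝ) : ℝ → ℝ → ℝ := fun x t => u x t - pdx (pdx u) x t

/-- The Geng–Xue system: `m_t + 3 u_x v m + u v m_x = 0`, `n_t + 3 v_x u n + u v n_x = 0`,
with `m = u - u_xx`, `n = v - v_xx`. -/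
def GXeq (u v : ℝ → ℝ → ℝ) : Prop :=
  ∀ x t : ℝ,
    pdt (mDef u) x t + 3 * pdx u x t * v x t * mDef u x t
      + u x t * v x t * pdx (mDef u) x t = 0 ∧
    pdt (mDef v) x t + 3 * pdx v x t * u x t * mDef v x t
      + u x t * v x t * pdx (mDef v) x t = 0

/-- The GX Lax matrix `U(λ)`. -/
noncomputable def Ulax (u v : ℝ → ℝ → ℝ) (l x t : ℝ) : Matrix (Fin 3) (Fin 3) ℝ :=
  !![0, l * mDef u x t, 1;
     0, 0, l * mDef v x t;
     1, 0, 0]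

/-- The GX Lax matrix `V(λ)`. -/
noncomputable def Vlax (u v : ℝ → ℝ → ℝ) (l x t : ℝ) : Matrix (Fin 3) (Fin 3) ℝ :=
  !![-(pdx u x t * v x t), pdx u x t / l - l * u x t * v x t * mDef u x t, pdx u x t * pdx v x t;
     v x t / l, -(1 / l ^ 2) + pdx u x t * v x t - u x t * pdx v x t,
       -(l * u x t * v x t * mDef v x t) - pdx v x t / l;
     -(u x t * v x t), u x t / l, u x t * pdx v x t]

lemma Smooth2.diffX {f : ℝ → ℝ → ℝ} (hf : Smooth2 f) (x t : ℝ) :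
    DifferentiableAt ℝ (fun x' => f x' t) x := by
  have h : ContDiff ℝ (⊤ : ℕ∞) (fun x' : ℝ => Function.uncurry f (x', t)) :=
    hf.comp (contDiff_id.prodMk contDiff_const)
  exact h.differentiable (by simp) x

lemma Smooth2.diffT {f : ℝ → ℝ → ℝ} (hf : Smooth2 f) (x t : ℝ) :
    DifferentiableAt ℝ (fun t' => f x t') t := by
  have h : ContDiff ℝ (⊤ : ℕ∞) (fun t' : ℝ => Function.uncurry f (x, t')) :=
    hf.comp (contDiff_const.prodMk contDiff_id)
  exact h.differentiable (by simp) t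

lemma pdx_eq_fderiv {f : ℝ → ℝ → ℝ} (hf : Smooth2 f) (x t : ℝ) :
    pdx f x t = fderiv ℝ (Function.uncurry f) (x, t) (1, 0) := by
  have hF : HasFDerivAt (Function.uncurry f) (fderiv ℝ (Function.uncurry f) (x, t)) (x, t) :=
    (hf.differentiable (by simp) (x, t)).hasFDerivAt
  have hg : HasFDerivAt (fun x' : ℝ => (x', t)) ((ContinuousLinearMap.id ℝ ℝ).prod 0) x :=
    (hasFDerivAt_id x).prodMk (hasFDerivAt_const t x)
  have h2 := (hF.comp x hg).hasDerivAt
  have h3 : deriv (fun x' => f x' t) x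
      = (fderiv ℝ (Function.uncurry f) (x, t)).comp ((ContinuousLinearMap.id ℝ ℝ).prod 0) 1 :=
    h2.deriv
  simpa [pdx] using h3

lemma smooth2_pdx {f : ℝ → ℝ → ℝ} (hf : Smooth2 f) : Smooth2 (pdx f) := by
  have h1 : ContDiff ℝ (⊤ : ℕ∞) (fun p : ℝ × ℝ => fderiv ℝ (Function.uncurry f) p ((1 : ℝ), (0 : ℝ))) :=
    (hf.fderiv_right (by simp)).clm_apply contDiff_const
  have h2 : Function.uncurry (pdx f)
      = fun p : ℝ × ℝ => fderiv ℝ (Function.uncurry f) p ((1 : ℝ), (0 : ℝ)) := by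
    funext p
    exact pdx_eq_fderiv hf p.1 p.2
  unfold Smooth2
  rw [h2]; exact h1

lemma smooth2_mDef {u : ℝ → ℝ → ℝ} (hu : Smooth2 u) : Smooth2 (mDef u) :=
  hu.sub (smooth2_pdx (smooth2_pdx hu))

lemma Ut_eq (u v : ℝ → ℝ → ℝ) (hu : Smooth2 u) (hv : Smooth2 v) (l x t : ℝ) :
    (Matrix.of fun i j : Fin 3 => pdt (fun x' t' => Ulax u v l x' t' i j) x t)
      = !![0, l * pdt (mDef u) x t, 0;
           0, 0, l * pdt (mDef v) x t;
           0, 0, 0] := by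
  ext i j
  fin_cases i <;> fin_cases j <;>
    simp only [Ulax, Matrix.of_apply, Matrix.cons_val', Matrix.cons_val_zero, Matrix.cons_val_one,
      Matrix.head_cons, Matrix.empty_val', Matrix.cons_val_fin_one, Matrix.head_fin_const,
      Matrix.cons_val_two, Matrix.tail_cons, pdt] <;>
    simp [deriv_const_mul_field, Matrix.vecHead, Matrix.vecTail]

lemma Vx_eq (u v : ℝ → ℝ → ℝ) (hu : Smooth2 u) (hv : Smooth2 v) (l x t : ℝ) :
    (Matrix.of fun i j : Fin 3 => pdx (fun x' t' => Vlax u v l x' t' i j) x t)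
      = !![-(pdx (pdx u) x t * v x t + pdx u x t * pdx v x t),
           pdx (pdx u) x t / l -
             ((l * pdx u x t * v x t + l * u x t * pdx v x t) * mDef u x t
               + l * u x t * v x t * pdx (mDef u) x t),
           pdx (pdx u) x t * pdx v x t + pdx u x t * pdx (pdx v) x t;
           pdx v x t / l,
           pdx (pdx u) x t * v x t + pdx u x t * pdx v x t
             - (pdx u x t * pdx v x t + u x t * pdx (pdx v) x t),
           -((l * pdx u x t * v x t + l * u x t * pdx v x t) * mDef v x t
               + l * u x t * v x t * pdx (mDef v) x t) - pdx (pdx v) x t / l;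
           -(pdx u x t * v x t + u x t * pdx v x t),
           pdx u x t / l,
           pdx u x t * pdx v x t + u x t * pdx (pdx v) x t] := by
  have HU : HasDerivAt (fun x' => u x' t) (pdx u x t) x := (hu.diffX x t).hasDerivAt
  have HV : HasDerivAt (fun x' => v x' t) (pdx v x t) x := (hv.diffX x t).hasDerivAt
  have HUX : HasDerivAt (fun x' => pdx u x' t) (pdx (pdx u) x t) x :=
    ((smooth2_pdx hu).diffX x t).hasDerivAt
  have HVX : HasDerivAt (fun x' => pdx v x' t) (pdx (pdx v) x t) x :=
    ((smooth2_pdx hv).diffX x t).hasDerivAt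
  have HUXX : HasDerivAt (fun x' => pdx (pdx u) x' t) (pdx (pdx (pdx u)) x t) x :=
    ((smooth2_pdx (smooth2_pdx hu)).diffX x t).hasDerivAt
  have HM : HasDerivAt (fun x' => mDef u x' t) (pdx (mDef u) x t) x :=
    ((smooth2_mDef hu).diffX x t).hasDerivAt
  have HN : HasDerivAt (fun x' => mDef v x' t) (pdx (mDef v) x t) x :=
    ((smooth2_mDef hv).diffX x t).hasDerivAt
  ext i j
  fin_cases i <;> fin_cases j <;>
    simp only [Vlax, Matrix.of_apply, Matrix.cons_val', Matrix.cons_val_zero, Matrix.cons_val_one,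
      Matrix.head_cons, Matrix.empty_val', Matrix.cons_val_fin_one, Matrix.head_fin_const,
      Matrix.cons_val_two, Matrix.tail_cons, Matrix.vecHead, Matrix.vecTail, pdx]
  · exact ((HUX.mul HV).neg).deriv
  · have h : HasDerivAt (fun x' => pdx u x' t / l - l * u x' t * v x' t * mDef u x' t)
        (pdx (pdx u) x t / l -
          ((l * pdx u x t * v x t + l * u x t * pdx v x t) * mDef u x t
            + l * u x t * v x t * pdx (mDef u) x t)) x := by
      exact (HUX.div_const l).sub (((HU.const_mul l).mul HV).mul HM)
    exact h.deriv
  · exact (HUX.mul HVX).deriv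
  · exact (HV.div_const l).deriv
  · have h : HasDerivAt
        (fun x' => -(1 / l ^ 2) + pdx u x' t * v x' t - u x' t * pdx v x' t)
        (pdx (pdx u) x t * v x t + pdx u x t * pdx v x t
          - (pdx u x t * pdx v x t + u x t * pdx (pdx v) x t)) x :=
      ((HUX.mul HV).const_add (-(1 / l ^ 2))).sub (HU.mul HVX)
    exact h.deriv
  · have h : HasDerivAt
        (fun x' => -(l * u x' t * v x' t * mDef v x' t) - pdx v x' t / l)
        (-((l * pdx u x t * v x t + l * u x t * pdx v x t) * mDef v x t
            + l * u x t * v x t * pdx (mDef v) x t) - pdx (pdx v) x t / l) x := by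
      exact ((((HU.const_mul l).mul HV).mul HN).neg).sub (HVX.div_const l)
    exact h.deriv
  · exact ((HU.mul HV).neg).deriv
  · exact (HU.div_const l).deriv
  · exact (HU.mul HVX).deriv

set_option maxHeartbeats 1000000 in
lemma keylem (u v : ℝ → ℝ → ℝ) (hu : Smooth2 u) (hv : Smooth2 v) (l x t : ℝ) (hl : l ≠ 0) :
    (Matrix.of fun i j : Fin 3 => pdt (fun x' t' => Ulax u v l x' t' i j) x t)
        - (Matrix.of fun i j : Fin 3 => pdx (fun x' t' => Vlax u v l x' t' i j) x t)
        + Ulax u v l x t * Vlax u v l x t - Vlax u v l x t * Ulax u v l x t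
      = !![0, l * (pdt (mDef u) x t + 3 * pdx u x t * v x t * mDef u x t
              + u x t * v x t * pdx (mDef u) x t), 0;
           0, 0, l * (pdt (mDef v) x t + 3 * pdx v x t * u x t * mDef v x t
              + u x t * v x t * pdx (mDef v) x t);
           0, 0, 0] := by
  rw [Ut_eq u v hu hv l x t, Vx_eq u v hu hv l x t]
  ext i j
  fin_cases i <;> fin_cases j <;>
    simp only [Matrix.sub_apply, Matrix.add_apply, Matrix.mul_apply, Fin.sum_univ_three,
      Ulax, Vlax, Matrix.of_apply, Matrix.cons_val', Matrix.cons_val_zero, Matrix.cons_val_one,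
      Matrix.head_cons, Matrix.empty_val', Matrix.cons_val_fin_one, Matrix.head_fin_const,
      Matrix.cons_val_two, Matrix.tail_cons, Matrix.vecHead, Matrix.vecTail, mDef,
      Fin.isValue, Fin.zero_eta, Fin.mk_one, Function.comp_apply, Fin.succ_zero_eq_one,
      Fin.succ_one_eq_two, Fin.reduceFinMk] <;>
    field_simp <;>
    ring

/-- The zero-curvature equation `U_t - V_x + U V - V U = 0` holds for all `λ ≠ 0`
iff `(u, v)` solves the Geng–Xue system. -/
theorem stmt0 (u v : ℝ → ℝ → ℝ) (hu : Smooth2 u) (hv : Smooth2 v) :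
    (∀ l : ℝ, l ≠ 0 → ∀ x t : ℝ,
      (Matrix.of fun i j : Fin 3 => pdt (fun x' t' => Ulax u v l x' t' i j) x t)
        - (Matrix.of fun i j : Fin 3 => pdx (fun x' t' => Vlax u v l x' t' i j) x t)
        + Ulax u v l x t * Vlax u v l x t - Vlax u v l x t * Ulax u v l x t = 0)
    ↔ GXeq u v := by
  constructor
  · intro h x t
    have h' := h 1 one_ne_zero x t
    rw [keylem u v hu hv 1 x t one_ne_zero] at h'
    rw [← Matrix.ext_iff] at h'
    constructor
    · have e := h' 0 1
      simpa using e
    · have e := h' 1 2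
      simpa using e
  · intro hgx l hl x t
    rw [keylem u v hu hv l x t hl]
    obtain ⟨h1, h2⟩ := hgx x t
    rw [h1, h2]
    ext i j
    fin_cases i <;> fin_cases j <;> simp [Matrix.vecHead, Matrix.vecTail]
end

section
/- Let u, v : ℝ×ℝ → ℝ be smooth solutions of the Geng–Xue system with m = u − u_xx > 0, n = v − v_xx > 0, and set q = (m n)^{1/3}, p = m/q. Let y : ℝ×ℝ → ℝ be smooth with y_x = q and y_t = −u v q, and suppose that for each t the map x ↦ y(x,t) is a bijection of ℝ onto ℝ with smooth inverse. Let p̃, q̃, ũ, ṽ be the functions of (y,τ) obtained by transport, i.e. p̃(y(x,t), t) = p(x,t), and similarly for q̃, ũ, ṽ. Then for every λ ≠ 0 and every smooth solution ψ : ℝ×ℝ → ℝ³ of ψ_x = U(λ)ψ, ψ_t = V(λ)ψ, the transported function ψ̃ defined by ψ̃(y(x,t), t) = ψ(x,t) satisfies ψ̃_y = F(λ)ψ̃ and ψ̃_τ = G(λ)ψ̃, where F, G are the aGX Lax matrices built from p̃, q̃, ũ, ṽ. -/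
open Matrix

/-- The aGX Lax matrix `F(λ)`. -/
noncomputable def Flax (p q : ℝ → ℝ → ℝ) (l y τ : ℝ) : Matrix (Fin 3) (Fin 3) ℝ :=
  !![0, l * p y τ, 1 / q y τ;
     0, 0, l * q y τ / p y τ;
     1 / q y τ, 0, 0]

/-- The aGX Lax matrix `G(λ)`. -/
noncomputable def Glax (q u v : ℝ → ℝ → ℝ) (l y τ : ℝ) : Matrix (Fin 3) (Fin 3) ℝ :=
  !![-(pdx u y τ * v y τ * q y τ), pdx u y τ * q y τ / l,
       u y τ * v y τ + pdx u y τ * pdx v y τ * q y τ ^ 2;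
     v y τ / l, pdx u y τ * v y τ * q y τ - u y τ * pdx v y τ * q y τ - 1 / l ^ 2,
       -(pdx v y τ * q y τ) / l;
     0, u y τ / l, u y τ * pdx v y τ * q y τ]

/-- `ψ` solves the GX Lax pair at spectral parameter `λ`. -/
def SolvesLax (u v : ℝ → ℝ → ℝ) (l : ℝ) (ψ : ℝ → ℝ → Fin 3 → ℝ) : Prop :=
  (∀ i : Fin 3, Smooth2 (fun x t => ψ x t i)) ∧
  ∀ x t : ℝ,
    (∀ i : Fin 3, deriv (fun x' => ψ x' t i) x = ((Ulax u v l x t).mulVec (ψ x t)) i) ∧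
    (∀ i : Fin 3, deriv (fun t' => ψ x t' i) t = ((Vlax u v l x t).mulVec (ψ x t)) i)


lemma Smooth2.hasDerivAt_x {f : ℝ → ℝ → ℝ} (hf : Smooth2 f) (x t : ℝ) :
    HasDerivAt (fun x' => f x' t) (pdx f x t) x := by
  have h1 : DifferentiableAt ℝ (Function.uncurry f) (x, t) :=
    (hf.differentiable (by simp)).differentiableAt
  have h : DifferentiableAt ℝ (fun x' => f x' t) x :=
    by have hc := h1.comp x (differentiableAt_id.prodMk (differentiableAt_const t) : DifferentiableAt ℝ (fun x' : ℝ => (x', t)) x); exact hc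
  exact h.hasDerivAt

lemma Smooth2.hasDerivAt_t {f : ℝ → ℝ → ℝ} (hf : Smooth2 f) (x t : ℝ) :
    HasDerivAt (fun t' => f x t') (pdt f x t) t := by
  have h1 : DifferentiableAt ℝ (Function.uncurry f) (x, t) :=
    (hf.differentiable (by simp)).differentiableAt
  have h : DifferentiableAt ℝ (fun t' => f x t') t :=
    by have hc := h1.comp t ((differentiableAt_const x).prodMk differentiableAt_id : DifferentiableAt ℝ (fun t' : ℝ => (x, t')) t); exact hc
  exact h.hasDerivAt

lemma hasDerivAt_comp2 {f : ℝ → ℝ → ℝ} (hf : Smooth2 f) {γ δ : ℝ → ℝ} {a b T : ℝ}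
    (hγ : HasDerivAt γ a T) (hδ : HasDerivAt δ b T) :
    HasDerivAt (fun s => f (γ s) (δ s))
      (pdx f (γ T) (δ T) * a + pdt f (γ T) (δ T) * b) T := by
  set P := (γ T, δ T) with hP
  set D := fderiv ℝ (Function.uncurry f) P with hD
  have hF : HasFDerivAt (Function.uncurry f) D P :=
    ((hf.differentiable (by simp)) P).hasFDerivAt
  have hc : HasDerivAt (fun s => (γ s, δ s)) (a, b) T := hγ.prodMk hδ
  have h := hF.comp_hasDerivAt T hc
  have hx : pdx f (γ T) (δ T) = D (1, 0) := by
    have h2 := hF.comp_hasDerivAt (γ T)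
      ((hasDerivAt_id (γ T)).prodMk (hasDerivAt_const (γ T) (δ T)))
    have h2' : HasDerivAt (fun x' => f x' (δ T)) (D (1, 0)) (γ T) := h2
    simpa [pdx] using h2'.deriv
  have ht : pdt f (γ T) (δ T) = D (0, 1) := by
    have h2 := hF.comp_hasDerivAt (δ T)
      ((hasDerivAt_const (δ T) (γ T)).prodMk (hasDerivAt_id (δ T)))
    have h2' : HasDerivAt (fun t' => f (γ T) t') (D (0, 1)) (δ T) := h2
    simpa [pdt] using h2'.deriv
  have hsplit : ((a, b) : ℝ × ℝ) = a • ((1 : ℝ), (0 : ℝ)) + b • ((0 : ℝ), (1 : ℝ)) := by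
    simp
  rw [hsplit, map_add, ContinuousLinearMap.map_smul, ContinuousLinearMap.map_smul] at h
  have h' : HasDerivAt (fun s => f (γ s) (δ s)) (a • D (1, 0) + b • D (0, 1)) T := h
  simpa [hx, ht, smul_eq_mul, mul_comm] using h'

lemma transport_pdx {f2 ft g y : ℝ → ℝ → ℝ} (hf2 : Smooth2 f2) (hgsm : Smooth2 g)
    (hgr : ∀ s t : ℝ, y (g s t) t = s) (hft : ∀ x t : ℝ, ft (y x t) t = f2 x t) (Y T : ℝ) :
    pdx ft Y T = pdx f2 (g Y T) T * pdx g Y T := by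
  have hgY := hgsm.hasDerivAt_x Y T
  have hfd := (hf2.hasDerivAt_x (g Y T) T).comp Y hgY
  have hfd' : HasDerivAt (fun s => f2 (g s T) T) (pdx f2 (g Y T) T * pdx g Y T) Y := hfd
  have heq : (fun s => ft s T) = fun s => f2 (g s T) T := by
    funext s; rw [← hft (g s T) T, hgr]
  show deriv (fun s => ft s T) Y = _
  rw [heq]
  exact hfd'.deriv

/-- Under the reciprocal transformation `dy = q dx - u v q dt`, `dτ = dt` of the
Geng–Xue system, transported solutions of the GX Lax pair solve the aGX Lax pair. -/
theorem stmt2 (u v : ℝ → ℝ → ℝ) (hu : Smooth2 u) (hv : Smooth2 v) (hgx : GXeq u v)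
    (hm : ∀ x t : ℝ, 0 < mDef u x t) (hn : ∀ x t : ℝ, 0 < mDef v x t)
    -- q = (m n)^{1/3}, p = m / q
    (q p : ℝ → ℝ → ℝ)
    (hqdef : ∀ x t : ℝ, q x t = (mDef u x t * mDef v x t) ^ ((1 : ℝ) / 3))
    (hpdef : ∀ x t : ℝ, p x t = mDef u x t / q x t)
    -- the new independent variable y with y_x = q, y_t = -u v q
    (y : ℝ → ℝ → ℝ) (hy : Smooth2 y)
    (hyx : ∀ x t : ℝ, pdx y x t = q x t)
    (hyt : ∀ x t : ℝ, pdt y x t = -(u x t * v x t) * q x t)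
    -- for each t, x ↦ y(x,t) is a bijection of ℝ with smooth inverse g
    (g : ℝ → ℝ → ℝ) (hg : Smooth2 g)
    (hgl : ∀ x t : ℝ, g (y x t) t = x) (hgr : ∀ s t : ℝ, y (g s t) t = s)
    -- transported potentials
    (pt qt ut vt : ℝ → ℝ → ℝ)
    (hpt : ∀ x t : ℝ, pt (y x t) t = p x t) (hqt : ∀ x t : ℝ, qt (y x t) t = q x t)
    (hut : ∀ x t : ℝ, ut (y x t) t = u x t) (hvt : ∀ x t : ℝ, vt (y x t) t = v x t)
    -- a solution of the GX Lax pair and its transport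
    (l : ℝ) (hl : l ≠ 0)
    (ψ : ℝ → ℝ → Fin 3 → ℝ) (hψ : SolvesLax u v l ψ)
    (ψt : ℝ → ℝ → Fin 3 → ℝ)
    (hψt : ∀ x t : ℝ, ∀ i : Fin 3, ψt (y x t) t i = ψ x t i) :
    ∀ Y T : ℝ,
      (∀ i : Fin 3,
        deriv (fun Y' => ψt Y' T i) Y = ((Flax pt qt l Y T).mulVec (ψt Y T)) i) ∧
      (∀ i : Fin 3,
        deriv (fun T' => ψt Y T' i) T = ((Glax qt ut vt l Y T).mulVec (ψt Y T)) i) := by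
  intro Y T
  obtain ⟨hψs, hψe⟩ := hψ
  set x := g Y T with hxdef
  have hyY : y x T = Y := hgr Y T
  have hmn : (0:ℝ) < mDef u x T * mDef v x T := mul_pos (hm x T) (hn x T)
  have hqpos : 0 < q x T := by rw [hqdef]; exact Real.rpow_pos_of_pos hmn _
  have hq0 : q x T ≠ 0 := ne_of_gt hqpos
  have hq3 : q x T ^ 3 = mDef u x T * mDef v x T := by
    rw [hqdef, ← Real.rpow_natCast ((mDef u x T * mDef v x T) ^ ((1:ℝ)/3)) 3,
      ← Real.rpow_mul hmn.le]
    norm_num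
  have hp0 : p x T ≠ 0 := by
    rw [hpdef]; exact ne_of_gt (div_pos (hm x T) hqpos)
  -- derivative of g with respect to Y
  have hgY : HasDerivAt (fun s => g s T) (pdx g Y T) Y := hg.hasDerivAt_x Y T
  have hyD : HasDerivAt (fun x' => y x' T) (q x T) x := by
    have h := hy.hasDerivAt_x x T
    rwa [hyx] at h
  have hcomp1 : HasDerivAt (fun s => y (g s T) T) (q x T * pdx g Y T) Y := by
    have hc := hyD.comp Y hgY; exact hc
  have hfun1 : (fun s => y (g s T) T) = fun s : ℝ => s := funext fun s => hgr s T
  rw [hfun1] at hcomp1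
  have hQgY : q x T * pdx g Y T = 1 := hcomp1.unique (hasDerivAt_id Y)
  have hgYval : pdx g Y T = 1 / q x T := by
    rw [eq_div_iff hq0]; linear_combination hQgY
  -- derivative of g with respect to T
  have hgT : HasDerivAt (fun t' => g Y t') (pdt g Y T) T := hg.hasDerivAt_t Y T
  have hcomp2 := hasDerivAt_comp2 hy hgT (hasDerivAt_id T)
  have hcomp2' : HasDerivAt (fun t' => y (g Y t') t')
      (pdx y x T * pdt g Y T + pdt y x T * 1) T := hcomp2
  have hfun2 : (fun t' => y (g Y t') t') = fun _ : ℝ => Y := funext fun t' => hgr Y t'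
  rw [hfun2] at hcomp2'
  have hz : pdx y x T * pdt g Y T + pdt y x T * 1 = 0 := hcomp2'.unique (hasDerivAt_const T Y)
  rw [hyx, hyt] at hz
  have hgTval : pdt g Y T = u x T * v x T := by
    have h2 : q x T * (pdt g Y T - u x T * v x T) = 0 := by linear_combination hz
    rcases mul_eq_zero.mp h2 with h | h
    · exact absurd h hq0
    · linarith
  -- transported values
  have hptv : pt Y T = p x T := by rw [← hyY]; exact hpt x T
  have hqtv : qt Y T = q x T := by rw [← hyY]; exact hqt x T
  have hutv : ut Y T = u x T := by rw [← hyY]; exact hut x T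
  have hvtv : vt Y T = v x T := by rw [← hyY]; exact hvt x T
  have hψtv : ψt Y T = ψ x T := funext fun j => by rw [← hyY]; exact hψt x T j
  -- transported x-derivatives
  have hUx : pdx ut Y T = pdx u x T * pdx g Y T := transport_pdx hu hg hgr hut Y T
  have hVx : pdx vt Y T = pdx v x T * pdx g Y T := transport_pdx hv hg hgr hvt Y T
  constructor
  · intro i
    have hψd : pdx (fun a b => ψ a b i) x T = ((Ulax u v l x T).mulVec (ψ x T)) i :=
      (hψe x T).1 i
    have hψx : HasDerivAt (fun x' => ψ x' T i) (((Ulax u v l x T).mulVec (ψ x T)) i) x := by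
      have h := (hψs i).hasDerivAt_x x T
      rwa [hψd] at h
    have hc := hψx.comp Y hgY
    have hc' : HasDerivAt (fun s => ψ (g s T) T i)
        (((Ulax u v l x T).mulVec (ψ x T)) i * pdx g Y T) Y := hc
    have heq : (fun s => ψt s T i) = fun s => ψ (g s T) T i := by
      funext s; rw [← hψt (g s T) T i, hgr]
    rw [heq, hc'.deriv, hψtv, hgYval]
    have hMval := hm x T
    have hNval := hn x T
    have hPdef := hpdef x T
    fin_cases i
    · simp only [Ulax, Flax, Matrix.mulVec, dotProduct, Fin.sum_univ_three,
        Matrix.cons_val', Matrix.cons_val, Fin.reduceFinMk, Matrix.cons_val_zero, Matrix.cons_val_one, Matrix.cons_val_two,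
        Matrix.tail_cons, Matrix.head_cons,
        Matrix.head_fin_const, Matrix.empty_val', Matrix.cons_val_fin_one, Matrix.of_apply,
        Fin.isValue, hptv, hqtv]
      rw [hPdef]
      field_simp
      all_goals ring
    · simp only [Ulax, Flax, Matrix.mulVec, dotProduct, Fin.sum_univ_three,
        Matrix.cons_val', Matrix.cons_val, Fin.reduceFinMk, Matrix.cons_val_zero, Matrix.cons_val_one, Matrix.cons_val_two,
        Matrix.tail_cons, Matrix.head_cons,
        Matrix.head_fin_const, Matrix.empty_val', Matrix.cons_val_fin_one, Matrix.of_apply,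
        Fin.isValue, hptv, hqtv]
      rw [hPdef]
      field_simp
      linear_combination (-(l * ψ x T 2)) * hq3
    · simp [Ulax, Flax, Matrix.mulVec, dotProduct, Fin.sum_univ_three, hptv, hqtv]
      all_goals ring
  · intro i
    have hψdx : pdx (fun a b => ψ a b i) x T = ((Ulax u v l x T).mulVec (ψ x T)) i :=
      (hψe x T).1 i
    have hψdt : pdt (fun a b => ψ a b i) x T = ((Vlax u v l x T).mulVec (ψ x T)) i :=
      (hψe x T).2 i
    have hcT := hasDerivAt_comp2 (hψs i) hgT (hasDerivAt_id T)
    have hcT' : HasDerivAt (fun t' => ψ (g Y t') t' i)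
        (pdx (fun a b => ψ a b i) x T * pdt g Y T + pdt (fun a b => ψ a b i) x T * 1) T := hcT
    have heq : (fun t' => ψt Y t' i) = fun t' => ψ (g Y t') t' i := by
      funext t'; rw [← hψt (g Y t') t' i, hgr]
    rw [heq, hcT'.deriv, hψdx, hψdt, hgTval, hψtv]
    fin_cases i <;>
    · simp only [Ulax, Vlax, Glax, Matrix.mulVec, dotProduct, Fin.sum_univ_three,
        Matrix.cons_val', Matrix.cons_val, Fin.reduceFinMk, Matrix.cons_val_zero, Matrix.cons_val_one, Matrix.cons_val_two,
        Matrix.tail_cons, Matrix.head_cons,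
        Matrix.head_fin_const, Matrix.empty_val', Matrix.cons_val_fin_one, Matrix.of_apply,
        Fin.isValue]
      simp only [hutv, hvtv, hqtv, hUx, hVx, hgYval]
      field_simp
      all_goals ring
end

section
/- Let p, q : ℝ → ℝ be smooth with p > 0 and q > 0 everywhere, let λ ≠ 0, and let ψ = (ψ₁, ψ₂, ψ₃) : ℝ → ℝ³ be a smooth solution of ψ_y = F(λ)ψ, where F(λ) = [[0, λ p, 1/q], [0, 0, λ q/p], [1/q, 0, 0]]. Then the gauge-transformed function φ := p^{−1/3} q^{2/3} ψ₃ satisfies the Boussinesq spectral problem in factored form: (∂_y − r)(∂_y − s)(∂_y + r + s)φ = λ² φ, where r = 2p_y/(3p) − q_y/(3q) and s = −p_y/(3p) − q_y/(3q) − 1/q. -/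
open Matrix

/-- The aGX spatial Lax matrix `F(λ)` for potentials `p, q` of one variable. -/
noncomputable def Flax1 (p q : ℝ → ℝ) (l y : ℝ) : Matrix (Fin 3) (Fin 3) ℝ :=
  !![0, l * p y, 1 / q y;
     0, 0, l * q y / p y;
     1 / q y, 0, 0]

/-- The first-order operator `∂_y - r`. -/
noncomputable def opm (r f : ℝ → ℝ) : ℝ → ℝ := fun y => deriv f y - r y * f y

set_option maxHeartbeats 1600000 in
/-- Gauge transformation `φ = p^{-1/3} q^{2/3} ψ₃` sends solutions of `ψ_y = F(λ)ψ` to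
solutions of the factored Boussinesq spectral problem
`(∂_y - r)(∂_y - s)(∂_y + r + s)φ = λ²φ`. -/
theorem stmt4 (p q : ℝ → ℝ) (hp : ContDiff ℝ (⊤ : ℕ∞) p) (hq : ContDiff ℝ (⊤ : ℕ∞) q)
    (hppos : ∀ y : ℝ, 0 < p y) (hqpos : ∀ y : ℝ, 0 < q y)
    (l : ℝ) (hl : l ≠ 0)
    (ψ : ℝ → Fin 3 → ℝ) (hψ : ∀ i : Fin 3, ContDiff ℝ (⊤ : ℕ∞) (fun y => ψ y i))
    (hlax : ∀ y : ℝ, ∀ i : Fin 3,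
      deriv (fun y' => ψ y' i) y = ((Flax1 p q l y).mulVec (ψ y)) i)
    (φ r s : ℝ → ℝ)
    (hφ : ∀ y : ℝ, φ y = p y ^ (-(1 : ℝ) / 3) * q y ^ ((2 : ℝ) / 3) * ψ y 2)
    (hr : ∀ y : ℝ, r y = 2 * deriv p y / (3 * p y) - deriv q y / (3 * q y))
    (hs : ∀ y : ℝ, s y = -(deriv p y / (3 * p y)) - deriv q y / (3 * q y) - 1 / q y) :
    ∀ y : ℝ,
      opm r (opm s (fun z => deriv φ z + (r z + s z) * φ z)) y = l ^ 2 * φ y := by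
  have hp0 : ∀ y, p y ≠ 0 := fun y => (hppos y).ne'
  have hq0 : ∀ y, q y ≠ 0 := fun y => (hqpos y).ne'
  have hdp : ∀ y, HasDerivAt p (deriv p y) y :=
    fun y => (hp.differentiable (by simp) y).hasDerivAt
  have hdq : ∀ y, HasDerivAt q (deriv q y) y :=
    fun y => (hq.differentiable (by simp) y).hasDerivAt
  -- Lax equations component-wise
  have hψ0 : ∀ y, HasDerivAt (fun z => ψ z 0) (l * p y * ψ y 1 + 1 / q y * ψ y 2) y := by
    intro y
    have h := ((hψ 0).differentiable (by simp) y).hasDerivAt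
    rw [hlax y 0] at h
    refine h.congr_deriv ?_
    simp [Flax1, Matrix.mulVec, dotProduct, Fin.sum_univ_three]
  have hψ1 : ∀ y, HasDerivAt (fun z => ψ z 1) (l * q y / p y * ψ y 2) y := by
    intro y
    have h := ((hψ 1).differentiable (by simp) y).hasDerivAt
    rw [hlax y 1] at h
    refine h.congr_deriv ?_
    simp [Flax1, Matrix.mulVec, dotProduct, Fin.sum_univ_three]
  have hψ2 : ∀ y, HasDerivAt (fun z => ψ z 2) (1 / q y * ψ y 0) y := by
    intro y
    have h := ((hψ 2).differentiable (by simp) y).hasDerivAt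
    rw [hlax y 2] at h
    refine h.congr_deriv ?_
    simp [Flax1, Matrix.mulVec, dotProduct, Fin.sum_univ_three]
  -- derivatives of the gauge factors
  have hdA : ∀ y, HasDerivAt (fun y => p y ^ (-(1 : ℝ) / 3))
      (deriv p y * (-(1 : ℝ) / 3) * (p y ^ (-(1 : ℝ) / 3) / p y)) y := by
    intro y
    have h := (hdp y).rpow_const (p := -(1 : ℝ) / 3) (Or.inl (hp0 y))
    convert h using 1
    rw [Real.rpow_sub (hppos y), Real.rpow_one]
  have hdB : ∀ y, HasDerivAt (fun y => q y ^ ((2 : ℝ) / 3))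
      (deriv q y * ((2 : ℝ) / 3) * (q y ^ ((2 : ℝ) / 3) / q y)) y := by
    intro y
    have h := (hdq y).rpow_const (p := (2 : ℝ) / 3) (Or.inl (hq0 y))
    convert h using 1
    rw [Real.rpow_sub (hqpos y), Real.rpow_one]
  -- substitute φ, r, s
  have hφe : φ = fun y => p y ^ (-(1 : ℝ) / 3) * q y ^ ((2 : ℝ) / 3) * ψ y 2 := funext hφ
  have hre : r = fun y => 2 * deriv p y / (3 * p y) - deriv q y / (3 * q y) := funext hr
  have hse : s = fun y => -(deriv p y / (3 * p y)) - deriv q y / (3 * q y) - 1 / q y :=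
    funext hs
  subst hφe hre hse
  -- derivative of φ
  have hdφ : ∀ y, HasDerivAt (fun y => p y ^ (-(1 : ℝ) / 3) * q y ^ ((2 : ℝ) / 3) * ψ y 2)
      ((deriv p y * (-(1 : ℝ) / 3) * (p y ^ (-(1 : ℝ) / 3) / p y) * q y ^ ((2 : ℝ) / 3) +
        p y ^ (-(1 : ℝ) / 3) * (deriv q y * ((2 : ℝ) / 3) * (q y ^ ((2 : ℝ) / 3) / q y))) * ψ y 2 +
        p y ^ (-(1 : ℝ) / 3) * q y ^ ((2 : ℝ) / 3) * (1 / q y * ψ y 0)) y :=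
    fun y => (((hdA y).mul (hdB y)).mul (hψ2 y))
  -- Step 1: the inner function equals (u/q)(ψ₀ - ψ₂)
  have hinner : (fun z => deriv (fun y => p y ^ (-(1 : ℝ) / 3) * q y ^ ((2 : ℝ) / 3) * ψ y 2) z +
      ((2 * deriv p z / (3 * p z) - deriv q z / (3 * q z)) +
        (-(deriv p z / (3 * p z)) - deriv q z / (3 * q z) - 1 / q z)) *
        (p z ^ (-(1 : ℝ) / 3) * q z ^ ((2 : ℝ) / 3) * ψ z 2)) =
      fun z => p z ^ (-(1 : ℝ) / 3) * q z ^ ((2 : ℝ) / 3) / q z * (ψ z 0 - ψ z 2) := by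
    funext z
    rw [(hdφ z).deriv]
    field_simp
    ring
  rw [hinner]
  -- derivative of the middle function
  have hdg : ∀ y, HasDerivAt
      (fun z => p z ^ (-(1 : ℝ) / 3) * q z ^ ((2 : ℝ) / 3) / q z * (ψ z 0 - ψ z 2))
      (((deriv p y * (-(1 : ℝ) / 3) * (p y ^ (-(1 : ℝ) / 3) / p y) * q y ^ ((2 : ℝ) / 3) +
          p y ^ (-(1 : ℝ) / 3) * (deriv q y * ((2 : ℝ) / 3) * (q y ^ ((2 : ℝ) / 3) / q y))) * q y -
          p y ^ (-(1 : ℝ) / 3) * q y ^ ((2 : ℝ) / 3) * deriv q y) / q y ^ 2 * (ψ y 0 - ψ y 2) +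
        p y ^ (-(1 : ℝ) / 3) * q y ^ ((2 : ℝ) / 3) / q y *
          ((l * p y * ψ y 1 + 1 / q y * ψ y 2) - 1 / q y * ψ y 0)) y :=
    fun y => ((((hdA y).mul (hdB y)).div (hdq y) (hq0 y)).mul ((hψ0 y).sub (hψ2 y)))
  -- Step 2: after (∂ - s) we get l p u / q ψ₁
  have hmid : opm (fun y => -(deriv p y / (3 * p y)) - deriv q y / (3 * q y) - 1 / q y)
      (fun z => p z ^ (-(1 : ℝ) / 3) * q z ^ ((2 : ℝ) / 3) / q z * (ψ z 0 - ψ z 2)) =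
      fun z => l * p z * p z ^ (-(1 : ℝ) / 3) * q z ^ ((2 : ℝ) / 3) / q z * ψ z 1 := by
    funext z
    simp only [opm]
    rw [(hdg z).deriv]
    have h1 := hp0 z
    have h2 := hq0 z
    field_simp
    ring
  rw [hmid]
  -- Step 3
  intro y
  have hdh : HasDerivAt
      (fun z => l * p z * p z ^ (-(1 : ℝ) / 3) * q z ^ ((2 : ℝ) / 3) / q z * ψ z 1)
      ((((l * deriv p y * p y ^ (-(1 : ℝ) / 3) +
          l * p y * (deriv p y * (-(1 : ℝ) / 3) * (p y ^ (-(1 : ℝ) / 3) / p y))) * q y ^ ((2 : ℝ) / 3) +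
          l * p y * p y ^ (-(1 : ℝ) / 3) * (deriv q y * ((2 : ℝ) / 3) * (q y ^ ((2 : ℝ) / 3) / q y))) * q y -
          l * p y * p y ^ (-(1 : ℝ) / 3) * q y ^ ((2 : ℝ) / 3) * deriv q y) / q y ^ 2 * ψ y 1 +
        l * p y * p y ^ (-(1 : ℝ) / 3) * q y ^ ((2 : ℝ) / 3) / q y * (l * q y / p y * ψ y 2)) y := by
    have h1 : HasDerivAt (fun z => l * p z) (l * deriv p y) y := (hdp y).const_mul l
    exact ((((h1.mul (hdA y)).mul (hdB y)).div (hdq y) (hq0 y)).mul (hψ1 y))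
  simp only [opm]
  rw [hdh.deriv]
  have h1 := hp0 y
  have h2 := hq0 y
  field_simp
  ring
end

section
/- Under the hypotheses of the Darboux transformation for the aGX system (p, q, u, v smooth solving the aGX system; (φ₁, φ₂, φ₃) a solution of the aGX Lax pair at λ₁ ≠ 0 with φ₃, b₁ = φ₂/φ₃, and a₁² − 1 nowhere zero, a₁ = φ₁/φ₃, c₁ = √|a₁² − 1|; q₍₁₎ = (a₁² − 1)/(λ₁ p b₁), u₍₁₎ = (u a₁ − u_y q)/c₁, v₍₁₎ = c₁ (v a₁ − v_y q − b₁/λ₁)/(a₁² − 1)), the following identities hold: 1/q₍₁₎ = 1/q + a₁,_y/(a₁² − 1) and u₍₁₎ v₍₁₎ = u v + a₁,_τ/(a₁² − 1). -/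
open Matrix

/-- The associated Geng–Xue (aGX) system. -/
def AGXeq (p q u v : ℝ → ℝ → ℝ) : Prop :=
  ∀ y τ : ℝ,
    pdt p y τ = p y τ * q y τ * (u y τ * pdx v y τ - 2 * pdx u y τ * v y τ) ∧
    pdt q y τ = -(q y τ ^ 2) * pdx (fun y' τ' => u y' τ' * v y' τ') y τ ∧
    pdx (pdx u) y τ * q y τ ^ 2 + pdx u y τ * q y τ * pdx q y τ + p y τ * q y τ - u y τ = 0 ∧
    pdx (pdx v) y τ * q y τ ^ 2 + q y τ * pdx q y τ * pdx v y τ + q y τ ^ 2 / p y τ - v y τ = 0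

/-- `ψ` solves the aGX Lax pair at spectral parameter `λ`. -/
def SolvesALax (p q u v : ℝ → ℝ → ℝ) (l : ℝ) (ψ : ℝ → ℝ → Fin 3 → ℝ) : Prop :=
  (∀ i : Fin 3, Smooth2 (fun y τ => ψ y τ i)) ∧
  ∀ y τ : ℝ,
    (∀ i : Fin 3, deriv (fun y' => ψ y' τ i) y = ((Flax p q l y τ).mulVec (ψ y τ)) i) ∧
    (∀ i : Fin 3, deriv (fun τ' => ψ y τ' i) τ = ((Glax q u v l y τ).mulVec (ψ y τ)) i)

/-- The key identities `1/q₁ = 1/q + a₁,_y/(a₁²-1)` and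
`u₁ v₁ = u v + a₁,_τ/(a₁²-1)` for the Darboux transformation of the aGX system. -/
theorem stmt6 (p q u v : ℝ → ℝ → ℝ)
    (hp : Smooth2 p) (hq : Smooth2 q) (hu : Smooth2 u) (hv : Smooth2 v)
    (hp0 : ∀ y τ : ℝ, p y τ ≠ 0) (hq0 : ∀ y τ : ℝ, q y τ ≠ 0)
    (hagx : AGXeq p q u v)
    (l1 : ℝ) (hl1 : l1 ≠ 0)
    (φ : ℝ → ℝ → Fin 3 → ℝ) (hφ : SolvesALax p q u v l1 φ)
    (hφ3 : ∀ y τ : ℝ, φ y τ 2 ≠ 0)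
    (a1 b1 c1 : ℝ → ℝ → ℝ)
    (ha1 : ∀ y τ : ℝ, a1 y τ = φ y τ 0 / φ y τ 2)
    (hb1 : ∀ y τ : ℝ, b1 y τ = φ y τ 1 / φ y τ 2)
    (hc1 : ∀ y τ : ℝ, c1 y τ = Real.sqrt |a1 y τ ^ 2 - 1|)
    (hb10 : ∀ y τ : ℝ, b1 y τ ≠ 0) (ha10 : ∀ y τ : ℝ, a1 y τ ^ 2 - 1 ≠ 0)
    (q1 u1 v1 : ℝ → ℝ → ℝ)
    (hq1 : ∀ y τ : ℝ, q1 y τ = (a1 y τ ^ 2 - 1) / (l1 * p y τ * b1 y τ))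
    (hu1 : ∀ y τ : ℝ, u1 y τ = (u y τ * a1 y τ - pdx u y τ * q y τ) / c1 y τ)
    (hv1 : ∀ y τ : ℝ, v1 y τ =
      c1 y τ / (a1 y τ ^ 2 - 1) * (v y τ * a1 y τ - pdx v y τ * q y τ - b1 y τ / l1)) :
    ∀ y τ : ℝ,
      1 / q1 y τ = 1 / q y τ + pdx a1 y τ / (a1 y τ ^ 2 - 1) ∧
      u1 y τ * v1 y τ = u y τ * v y τ + pdt a1 y τ / (a1 y τ ^ 2 - 1) := by
  intro y τ
  obtain ⟨hsm, hlax⟩ := hφ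
  have hdx : ∀ i : Fin 3, DifferentiableAt ℝ (fun y' => φ y' τ i) y := fun i =>
    (((hsm i).differentiable (by simp)).comp
      ((differentiable_id.prodMk (differentiable_const τ)))) y
  have hdt : ∀ i : Fin 3, DifferentiableAt ℝ (fun τ' => φ y τ' i) τ := fun i =>
    (((hsm i).differentiable (by simp)).comp
      (((differentiable_const y).prodMk differentiable_id))) τ
  have hF := (hlax y τ).1
  have hG := (hlax y τ).2
  have e0y : deriv (fun y' => φ y' τ 0) y
      = l1 * p y τ * φ y τ 1 + 1 / q y τ * φ y τ 2 := by
    rw [hF 0]; simp [Flax, Matrix.mulVec, dotProduct, Fin.sum_univ_three]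
  have e2y : deriv (fun y' => φ y' τ 2) y = 1 / q y τ * φ y τ 0 := by
    rw [hF 2]; simp [Flax, Matrix.mulVec, dotProduct, Fin.sum_univ_three]
  have e0t : deriv (fun τ' => φ y τ' 0) τ
      = -(pdx u y τ * v y τ * q y τ) * φ y τ 0 + pdx u y τ * q y τ / l1 * φ y τ 1
        + (u y τ * v y τ + pdx u y τ * pdx v y τ * q y τ ^ 2) * φ y τ 2 := by
    rw [hG 0]; simp [Glax, Matrix.mulVec, dotProduct, Fin.sum_univ_three]
  have e2t : deriv (fun τ' => φ y τ' 2) τ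
      = u y τ / l1 * φ y τ 1 + u y τ * pdx v y τ * q y τ * φ y τ 2 := by
    rw [hG 2]; simp [Glax, Matrix.mulVec, dotProduct, Fin.sum_univ_three]
  have ha1fun : ∀ τ', (fun y' => a1 y' τ') = fun y' => φ y' τ' 0 / φ y' τ' 2 :=
    fun τ' => funext fun y' => ha1 y' τ'
  have ha1funt : (fun τ' => a1 y τ') = fun τ' => φ y τ' 0 / φ y τ' 2 :=
    funext fun τ' => ha1 y τ'
  have hφ2 := hφ3 y τ
  have hax : pdx a1 y τ
      = (deriv (fun y' => φ y' τ 0) y * φ y τ 2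
        - φ y τ 0 * deriv (fun y' => φ y' τ 2) y) / φ y τ 2 ^ 2 := by
    unfold pdx
    rw [ha1fun τ, deriv_fun_div (hdx 0) (hdx 2) hφ2]
  have hat : pdt a1 y τ
      = (deriv (fun τ' => φ y τ' 0) τ * φ y τ 2
        - φ y τ 0 * deriv (fun τ' => φ y τ' 2) τ) / φ y τ 2 ^ 2 := by
    unfold pdt
    rw [ha1funt, deriv_fun_div (hdt 0) (hdt 2) hφ2]
  have hc1' : c1 y τ ≠ 0 := by
    rw [hc1 y τ]
    exact (Real.sqrt_pos.mpr (abs_pos.mpr (ha10 y τ))).ne'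
  have hD := ha10 y τ
  have hq0' := hq0 y τ
  have hp0' := hp0 y τ
  have hb10' := hb10 y τ
  have hax2 : pdx a1 y τ = l1 * p y τ * b1 y τ + (1 - a1 y τ ^ 2) / q y τ := by
    rw [hax, e0y, e2y, ha1 y τ, hb1 y τ]
    field_simp
    ring
  have hat2 : pdt a1 y τ
      = -(pdx u y τ * v y τ * q y τ) * a1 y τ + pdx u y τ * q y τ / l1 * b1 y τ
        + (u y τ * v y τ + pdx u y τ * pdx v y τ * q y τ ^ 2)
        - a1 y τ * (u y τ / l1 * b1 y τ + u y τ * pdx v y τ * q y τ) := by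
    rw [hat, e0t, e2t, ha1 y τ, hb1 y τ]
    field_simp
  constructor
  · rw [hq1 y τ, hax2]
    field_simp
    ring
  · rw [hu1 y τ, hv1 y τ, hat2]
    field_simp
    ring
end

section
/- (Jacobi / Desnanot–Jacobi identity) Let n ≥ 2, let J be a real n×n matrix, let i₁ < i₂ be row indices and j₁ < j₂ be column indices. Then det(J) · det(J[i₁,i₂; j₁,j₂]) = det(J[i₁; j₁]) · det(J[i₂; j₂]) − det(J[i₁; j₂]) · det(J[i₂; j₁]), where J[i₁,…; j₁,…] denotes the submatrix of J obtained by deleting the rows i₁,… and the columns j₁,…. -/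
/-!
Let `B` be the identity matrix with its columns `j₁, j₂` replaced by the columns `i₁, i₂` of
`adj J`. Since `J * adj J = det J • 1`, the product `J * B` is `J` with those columns replaced by
`det J • e_{i₁}` and `det J • e_{i₂}`, so two Laplace expansions give
`det (J * B) = ± (det J)² det J[i₁,i₂; j₁,j₂]`. On the other hand `det B` is a `2 × 2` minor of
`adj J`, i.e. `± (det J[i₁;j₁] det J[i₂;j₂] - det J[i₁;j₂] det J[i₂;j₁])` with the same sign.
Hence the identity holds after multiplication by `det J`. That factor can be cancelled for the
generic matrix over `ℤ[X_ij]`, and the identity over any commutative ring follows by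
specialisation.
-/

open Matrix

/-- The strictly monotone embedding `Fin m → Fin (m+2)` that skips the two
indices `i₁ < i₂`; used to delete two rows (or columns) from a matrix. -/
def delTwo {m : ℕ} (i₁ i₂ : Fin (m + 2)) (h : i₁ < i₂) : Fin m → Fin (m + 2) :=
  i₂.succAbove ∘ (⟨i₁.1, by have h' : (i₁ : ℕ) < (i₂ : ℕ) := h; omega⟩ : Fin (m + 1)).succAbove

theorem delTwo_eq_succAbove_comp_succAbove {m : ℕ} {i₁ i₂ : Fin (m + 2)} (h : i₁ < i₂) :
    delTwo i₁ i₂ h = i₂.succAbove ∘ (i₁.castPred (Fin.ne_last_of_lt h)).succAbove :=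
  rfl

theorem Pi.single_succAbove_comp_succAbove {α : Type*} [Zero α] {n : ℕ} (p : Fin (n + 1))
    (i : Fin n) (c : α) :
    (Pi.single (p.succAbove i) c : Fin (n + 1) → α) ∘ p.succAbove = Pi.single i c := by
  ext r
  simp [Pi.single_apply, Fin.succAbove_right_injective.eq_iff]

namespace Matrix

theorem submatrix_updateCol_of_injective {α l m n o : Type*} [DecidableEq n] [DecidableEq o]
    (A : Matrix m n α) (f : l → m) {g : o → n} (hg : g.Injective) (j : o) (c : m → α) :
    (A.updateCol (g j) c).submatrix f g = (A.submatrix f g).updateCol j (c ∘ f) := by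
  ext r s
  simp [updateCol_apply, hg.eq_iff]

variable {R : Type*} [CommRing R]

/-- The matrix is `1 + C * E` with `E : Matrix (Fin 2) n R`, so `det (1 + C * E) = det (1 + E * C)`
reduces it to a `2 × 2` determinant. -/
theorem det_updateCol_updateCol_one {n : Type*} [Fintype n] [DecidableEq n] {j₁ j₂ : n}
    (hj : j₁ ≠ j₂) (u v : n → R) :
    (((1 : Matrix n n R).updateCol j₁ u).updateCol j₂ v).det = u j₁ * v j₂ - v j₁ * u j₂ := by
  let C : Matrix n (Fin 2) R :=
    of fun r => ![u r - (Pi.single j₁ 1 : n → R) r, v r - (Pi.single j₂ 1 : n → R) r]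
  let E : Matrix (Fin 2) n R := of ![(Pi.single j₁ 1 : n → R), Pi.single j₂ 1]
  have hCE : ((1 : Matrix n n R).updateCol j₁ u).updateCol j₂ v = 1 + C * E := by
    ext r c
    by_cases h₂ : c = j₂ <;> by_cases h₁ : c = j₁ <;>
      simp [C, E, mul_apply, one_apply, Pi.single_apply, h₁, h₂, hj, eq_comm]
  rw [hCE, det_one_add_mul_comm, det_fin_two]
  simp [C, E, Pi.single_apply, hj, hj.symm]

theorem det_updateCol_single {n : ℕ} (A : Matrix (Fin (n + 1)) (Fin (n + 1)) R)
    (i j : Fin (n + 1)) (c : R) :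
    (A.updateCol j (Pi.single i c)).det =
      (-1) ^ (i + j : ℕ) * c * (A.submatrix i.succAbove j.succAbove).det := by
  simp [det_succ_column _ j, submatrix_updateCol_succAbove, Pi.single_apply, mul_assoc]

theorem det_updateCol_single_updateCol_single {m : ℕ}
    (A : Matrix (Fin (m + 2)) (Fin (m + 2)) R) {i₁ i₂ j₁ j₂ : Fin (m + 2)} (hi : i₁ < i₂)
    (hj : j₁ < j₂) (c₁ c₂ : R) :
    ((A.updateCol j₁ (Pi.single i₁ c₁)).updateCol j₂ (Pi.single i₂ c₂)).det =
      (-1) ^ (i₁ + j₁ : ℕ) * (-1) ^ (i₂ + j₂ : ℕ) * c₁ * c₂ *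
        (A.submatrix (delTwo i₁ i₂ hi) (delTwo j₁ j₂ hj)).det := by
  set i₁' := i₁.castPred (Fin.ne_last_of_lt hi)
  set j₁' := j₁.castPred (Fin.ne_last_of_lt hj)
  have hsub : (A.updateCol j₁ (Pi.single i₁ c₁)).submatrix i₂.succAbove j₂.succAbove =
      (A.submatrix i₂.succAbove j₂.succAbove).updateCol j₁' (Pi.single i₁' c₁) := by
    rw [← Fin.succAbove_castPred_of_lt _ _ hi, ← Fin.succAbove_castPred_of_lt _ _ hj,
      submatrix_updateCol_of_injective _ _ Fin.succAbove_right_injective,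
      Pi.single_succAbove_comp_succAbove]
  rw [det_updateCol_single, hsub, det_updateCol_single, submatrix_submatrix,
    delTwo_eq_succAbove_comp_succAbove, delTwo_eq_succAbove_comp_succAbove]
  simp only [i₁', j₁', Fin.coe_castPred]
  ring

section Jacobi

variable {m : ℕ} (J : Matrix (Fin (m + 2)) (Fin (m + 2)) R) {i₁ i₂ j₁ j₂ : Fin (m + 2)}
  (hi : i₁ < i₂) (hj : j₁ < j₂)

theorem det_mul_det_mul_det_submatrix_delTwo :
    J.det * (J.det * (J.submatrix (delTwo i₁ i₂ hi) (delTwo j₁ j₂ hj)).det) =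
      J.det * ((J.submatrix i₁.succAbove j₁.succAbove).det *
          (J.submatrix i₂.succAbove j₂.succAbove).det -
        (J.submatrix i₁.succAbove j₂.succAbove).det *
          (J.submatrix i₂.succAbove j₁.succAbove).det) := by
  set B := ((1 : Matrix _ _ R).updateCol j₁ (J.adjugate.col i₁)).updateCol j₂ (J.adjugate.col i₂)
  have hJB : J * B =
      (J.updateCol j₁ (Pi.single i₁ J.det)).updateCol j₂ (Pi.single i₂ J.det) := by
    rw [mul_updateCol, mul_updateCol, mul_one, ← mulVec_single_one, ← mulVec_single_one,
      mulVec_mulVec, mulVec_mulVec, mul_adjugate, mulVec_single_one, mulVec_single_one,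
      smul_one_eq_diagonal, col_diagonal, col_diagonal]
  have hB : B.det = J.adjugate j₁ i₁ * J.adjugate j₂ i₂ - J.adjugate j₁ i₂ * J.adjugate j₂ i₁ :=
    det_updateCol_updateCol_one hj.ne _ _
  have hdet := det_mul J B
  rw [hJB, det_updateCol_single_updateCol_single _ hi hj, hB] at hdet
  simp only [adjugate_fin_succ_eq_det_submatrix] at hdet
  have hσ : ((-1 : R) ^ (i₁ + j₁ : ℕ) * (-1) ^ (i₂ + j₂ : ℕ)) ^ 2 = 1 := by
    rw [← pow_add, ← pow_mul, mul_comm, pow_mul, neg_one_sq, one_pow]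
  have hswap : (-1 : R) ^ (i₂ + j₁ : ℕ) * (-1) ^ (i₁ + j₂ : ℕ) =
      (-1) ^ (i₁ + j₁ : ℕ) * (-1) ^ (i₂ + j₂ : ℕ) := by
    rw [← pow_add, ← pow_add]
    congr 1
    omega
  set σ := (-1 : R) ^ (i₁ + j₁ : ℕ) * (-1) ^ (i₂ + j₂ : ℕ)
  set d := J.det
  set D := (J.submatrix (delTwo i₁ i₂ hi) (delTwo j₁ j₂ hj)).det
  set M₁₁ := (J.submatrix i₁.succAbove j₁.succAbove).det
  set M₁₂ := (J.submatrix i₁.succAbove j₂.succAbove).det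
  set M₂₁ := (J.submatrix i₂.succAbove j₁.succAbove).det
  set M₂₂ := (J.submatrix i₂.succAbove j₂.succAbove).det
  -- multiply `hdet` by `σ`, using `σ² = 1` and `hswap`
  linear_combination σ * hdet - (d ^ 2 * D - d * M₁₁ * M₂₂ + d * M₁₂ * M₂₁) * hσ -
    d * M₁₂ * M₂₁ * σ * hswap

theorem det_mul_det_submatrix_delTwo_of_det_ne_zero [IsDomain R] (hJ : J.det ≠ 0) :
    J.det * (J.submatrix (delTwo i₁ i₂ hi) (delTwo j₁ j₂ hj)).det =
      (J.submatrix i₁.succAbove j₁.succAbove).det * (J.submatrix i₂.succAbove j₂.succAbove).det -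
        (J.submatrix i₁.succAbove j₂.succAbove).det * (J.submatrix i₂.succAbove j₁.succAbove).det :=
  mul_left_cancel₀ hJ (det_mul_det_mul_det_submatrix_delTwo J hi hj)

theorem det_mul_det_submatrix_delTwo :
    J.det * (J.submatrix (delTwo i₁ i₂ hi) (delTwo j₁ j₂ hj)).det =
      (J.submatrix i₁.succAbove j₁.succAbove).det * (J.submatrix i₂.succAbove j₂.succAbove).det -
        (J.submatrix i₁.succAbove j₂.succAbove).det * (J.submatrix i₂.succAbove j₁.succAbove).det := by
  let X := mvPolynomialX (Fin (m + 2)) (Fin (m + 2)) ℤ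
  let f := MvPolynomial.aeval (R := ℤ) fun p : Fin (m + 2) × Fin (m + 2) => J p.1 p.2
  have hX := congrArg f <|
    det_mul_det_submatrix_delTwo_of_det_ne_zero X hi hj (det_mvPolynomialX_ne_zero _ ℤ)
  simp only [map_mul, map_sub, AlgHom.map_det] at hX
  rw [← mvPolynomialX_mapMatrix_aeval ℤ J]
  exact hX

end Jacobi

end Matrix

/-- The Desnanot–Jacobi identity:
`det J · det J[i₁,i₂;j₁,j₂] = det J[i₁;j₁] det J[i₂;j₂] - det J[i₁;j₂] det J[i₂;j₁]`. -/
theorem stmt12 (m : ℕ) (J : Matrix (Fin (m + 2)) (Fin (m + 2)) ℝ)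
    (i₁ i₂ j₁ j₂ : Fin (m + 2)) (hi : i₁ < i₂) (hj : j₁ < j₂) :
    J.det * (J.submatrix (delTwo i₁ i₂ hi) (delTwo j₁ j₂ hj)).det =
      (J.submatrix i₁.succAbove j₁.succAbove).det *
        (J.submatrix i₂.succAbove j₂.succAbove).det -
      (J.submatrix i₁.succAbove j₂.succAbove).det *
        (J.submatrix i₂.succAbove j₁.succAbove).det :=
  det_mul_det_submatrix_delTwo J hi hj
end

section
/- Let k ≥ 0, N = 3k+2, and let λ_1,…,λ_{N+1}, a_1,…,a_{N+1}, b_1,…,b_{N+1} be real numbers. With Δ_N, Δ_{N+1}, A_N, B_N, A_{N−1}, B_{N−1} defined from this data as in the context, one has the identity A_{N−1} B_N − A_N B_{N−1} = Δ_N · Δ_{N+1}[N, N+1; 1, 2]. -/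
open Matrix

/-- Entry in column `c` (0-based) of the row built from `(λ_j, a_j, b_j)`:
the columns cycle through `λ_j^{2i}`, `λ_j^{2i} a_j`, `λ_j^{2i+1} b_j`. -/
noncomputable def colEntry (lam a b : ℕ → ℝ) (j c : ℕ) : ℝ :=
  if c % 3 = 0 then lam j ^ (2 * (c / 3))
  else if c % 3 = 1 then lam j ^ (2 * (c / 3)) * a j
  else lam j ^ (2 * (c / 3) + 1) * b j

/-- The determinant `Δ_n` (rows indexed `1, …, n`, columns `0, …, n-1` 0-based). -/
noncomputable def Dlt (lam a b : ℕ → ℝ) (n : ℕ) : ℝ :=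
  Matrix.det (Matrix.of fun i c : Fin n => colEntry lam a b (i.1 + 1) c.1)

/-- `A_n = Δ_{n+1}[n+1; 1]` : delete the last row and the first column of `Δ_{n+1}`. -/
noncomputable def Adet (lam a b : ℕ → ℝ) (n : ℕ) : ℝ :=
  Matrix.det (Matrix.of fun i c : Fin n => colEntry lam a b (i.1 + 1) (c.1 + 1))

/-- `B_n = Δ_{n+1}[n+1; 2]` : delete the last row and the second column of `Δ_{n+1}`. -/
noncomputable def Bdet (lam a b : ℕ → ℝ) (n : ℕ) : ℝ :=
  Matrix.det (Matrix.of fun i c : Fin n =>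
    colEntry lam a b (i.1 + 1) (if c.1 = 0 then 0 else c.1 + 1))

/-- `C_n = Δ_{n+1}[n; 1]` : delete the second-to-last row and the first column of `Δ_{n+1}`. -/
noncomputable def Cdet (lam a b : ℕ → ℝ) (n : ℕ) : ℝ :=
  Matrix.det (Matrix.of fun i c : Fin n =>
    colEntry lam a b ((if i.1 + 1 < n then i.1 else i.1 + 1) + 1) (c.1 + 1))

/-- `D_n = Δ_{n+1}[n; 2]` : delete the second-to-last row and the second column of `Δ_{n+1}`. -/
noncomputable def Ddet (lam a b : ℕ → ℝ) (n : ℕ) : ℝ :=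
  Matrix.det (Matrix.of fun i c : Fin n =>
    colEntry lam a b ((if i.1 + 1 < n then i.1 else i.1 + 1) + 1)
      (if c.1 = 0 then 0 else c.1 + 1))

/-! The identity is a three-term Plücker relation among the maximal minors of the
`(m + 2) × (m + 3)` array `E i c = colEntry lam a b (i + 1) c` (here `m = 3k`); it holds for
any array `E`. The signed maximal minors `v j = (-1)^j det X[·, ĵ]` of the wide matrix `X`
satisfy `X v = 0` (Laplace expansion of `X` with one row repeated). Let `A = E[0..m, 1..m+1]`.
By linearity of the determinant in the first column,
`∑ j, v j * det (A with its first column replaced by column j of E) = 0`.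
The terms with `2 ≤ j ≤ m + 1` vanish because a column is repeated, and the three remaining
terms (`j = 0, 1, m + 2`) give the three products of the identity. -/

section Plucker

variable {R : Type*}

def firstColReplaced (E : ℕ → ℕ → R) (m j : ℕ) : Matrix (Fin (m + 1)) (Fin (m + 1)) R :=
  (of fun i c : Fin (m + 1) => E i.1 (c.1 + 1)).updateCol 0 fun r => E r.1 j

theorem firstColReplaced_zero (E : ℕ → ℕ → R) (m : ℕ) :
    firstColReplaced E m 0 =
      of fun i c : Fin (m + 1) => E i.1 (if c.1 = 0 then 0 else c.1 + 1) := by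
  ext i c
  induction c using Fin.cases <;> simp [firstColReplaced]

theorem firstColReplaced_one (E : ℕ → ℕ → R) (m : ℕ) :
    firstColReplaced E m 1 = of fun i c : Fin (m + 1) => E i.1 (c.1 + 1) :=
  updateCol_eq_self _ 0

variable [CommRing R]

theorem sum_mul_det_updateCol_eq_zero {n ι : Type*} [Fintype n] [DecidableEq n] [Fintype ι]
    (A : Matrix n n R) (p : n) (Y : Matrix n ι R) {v : ι → R} (hv : Y *ᵥ v = 0) :
    ∑ j, v j * det (A.updateCol p fun r => Y r j) = 0 := by
  let L : (n → R) →ₗ[R] R :=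
    (detRowAlternating : (n → R) [⋀^n]→ₗ[R] R).toMultilinearMap.toLinearMap Aᵀ p
  have hL : ∀ u, L u = det (A.updateCol p u) := fun u => by
    rw [← det_transpose, ← updateRow_transpose]; rfl
  have hYv : Y *ᵥ v = ∑ j, v j • fun r => Y r j := by
    ext r; simp [mulVec, dotProduct, mul_comm]
  calc ∑ j, v j * det (A.updateCol p fun r => Y r j) = L (Y *ᵥ v) := by
        simp_rw [hYv, map_sum, map_smul, hL, smul_eq_mul]
    _ = 0 := by rw [hv, map_zero]

def signedMinors {n : ℕ} (X : Matrix (Fin (n + 1)) (Fin (n + 2)) R) : Fin (n + 2) → R :=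
  fun j => (-1) ^ (j : ℕ) * det (X.submatrix id j.succAbove)

theorem mulVec_signedMinors {n : ℕ} (X : Matrix (Fin (n + 1)) (Fin (n + 2)) R) :
    X *ᵥ signedMinors X = 0 := by
  funext i
  let Z : Matrix (Fin (n + 2)) (Fin (n + 2)) R := of (Fin.cons (X i) X)
  have hZ : det Z = 0 := det_zero_of_row_eq (i := 0) (j := i.succ) (Fin.succ_ne_zero i).symm rfl
  rw [det_succ_row_zero] at hZ
  rw [Pi.zero_apply, ← hZ, mulVec, dotProduct]
  refine Finset.sum_congr rfl fun j _ => ?_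
  change X i j * ((-1) ^ (j : ℕ) * det (X.submatrix id j.succAbove)) =
    (-1) ^ (j : ℕ) * X i j * det (X.submatrix id j.succAbove)
  ring

theorem det_firstColReplaced_add_two (E : ℕ → ℕ → R) {m : ℕ} (k : Fin m) :
    det (firstColReplaced E m (k + 2)) = 0 :=
  det_updateCol_eq_zero (i := k.succ) (Fin.succ_ne_zero k)

theorem det_firstColReplaced_self_add_two (E : ℕ → ℕ → R) (m : ℕ) :
    det (firstColReplaced E m (m + 2)) =
      (-1) ^ m * det (of fun i c : Fin (m + 1) => E i.1 (c.1 + 2)) := by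
  have hrot : (of fun i c : Fin (m + 1) => E i.1 (c.1 + 2)) =
      (firstColReplaced E m (m + 2)).submatrix id (finRotate (m + 1)) := by
    ext i c
    induction c using Fin.lastCases with
    | last => simp [firstColReplaced]
    | cast k =>
      have hk : finRotate (m + 1) k.castSucc = k.succ := Fin.ext (by
        rw [coe_finRotate_of_ne_last (Fin.castSucc_lt_last k).ne]; simp)
      simp [firstColReplaced, hk, Fin.succ_ne_zero]
  rw [hrot, det_permute', sign_finRotate, ← mul_assoc]
  push_cast
  rw [← pow_add, Even.neg_one_pow ⟨m, rfl⟩, one_mul]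

theorem three_term_plucker_relation (E : ℕ → ℕ → R) (m : ℕ) :
    det (of fun i c : Fin (m + 1) => E i.1 (c.1 + 1)) *
        det (of fun i c : Fin (m + 2) => E i.1 (if c.1 = 0 then 0 else c.1 + 1))
      - det (of fun i c : Fin (m + 2) => E i.1 (c.1 + 1)) *
        det (of fun i c : Fin (m + 1) => E i.1 (if c.1 = 0 then 0 else c.1 + 1))
    = det (of fun i c : Fin (m + 2) => E i.1 c.1) *
        det (of fun i c : Fin (m + 1) => E i.1 (c.1 + 2)) := by
  let X : Matrix (Fin (m + 2)) (Fin (m + 3)) R := of fun i c => E i.1 c.1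
  have hsum : ∑ j, signedMinors X j * det (firstColReplaced E m j) = 0 :=
    sum_mul_det_updateCol_eq_zero _ 0 (of fun (r : Fin (m + 1)) (c : Fin (m + 3)) => E r.1 c.1)
      (funext fun r => congrFun (mulVec_signedMinors X) r.castSucc)
  have hX0 : signedMinors X 0 = det (of fun i c : Fin (m + 2) => E i.1 (c.1 + 1)) := by
    simp [signedMinors, X]; rfl
  have hX1 : signedMinors X 1 =
      -det (of fun i c : Fin (m + 2) => E i.1 (if c.1 = 0 then 0 else c.1 + 1)) := by
    have hcol (c : Fin (m + 2)) :
        ((1 : Fin (m + 3)).succAbove c).1 = if c.1 = 0 then 0 else c.1 + 1 := by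
      induction c using Fin.cases <;> simp
    simp only [signedMinors, Fin.val_one, pow_one, neg_one_mul, neg_inj]
    congr 1
    ext i c
    simp [X, hcol]
  have hXlast : signedMinors X (Fin.last (m + 2)) =
      (-1) ^ m * det (of fun i c : Fin (m + 2) => E i.1 c.1) := by
    simp [signedMinors, X, pow_add]; rfl
  rw [Fin.sum_univ_succ, Fin.sum_univ_succ, Fin.sum_univ_castSucc] at hsum
  simp only [Fin.succ_zero_eq_one, Fin.succ_last, Fin.val_succ, Fin.val_castSucc, Fin.val_last,
    Fin.val_zero, Fin.val_one, det_firstColReplaced_add_two, mul_zero, Finset.sum_const_zero,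
    zero_add, hX0, hX1, hXlast, firstColReplaced_zero, firstColReplaced_one,
    det_firstColReplaced_self_add_two] at hsum
  have hsign : (-1 : R) ^ m * (-1) ^ m = 1 := by rw [← pow_add, Even.neg_one_pow ⟨m, rfl⟩]
  linear_combination -hsum + det (of fun i c : Fin (m + 2) => E i.1 c.1) *
    det (of fun i c : Fin (m + 1) => E i.1 (c.1 + 2)) * hsign

end Plucker

/-- For `N = 3k+2`: `A_{N-1} B_N - A_N B_{N-1} = Δ_N · Δ_{N+1}[N, N+1; 1, 2]`. -/
theorem stmt13 (k : ℕ) (lam a b : ℕ → ℝ) :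
    Adet lam a b (3 * k + 1) * Bdet lam a b (3 * k + 2)
      - Adet lam a b (3 * k + 2) * Bdet lam a b (3 * k + 1)
    = Dlt lam a b (3 * k + 2) *
        Matrix.det (Matrix.of fun i c : Fin (3 * k + 1) =>
          colEntry lam a b (i.1 + 1) (c.1 + 2)) :=
  three_term_plucker_relation (fun i c => colEntry lam a b (i + 1) c) (3 * k)
end

section
/- Let k ≥ 1, N = 3k+2, and let λ_1,…,λ_{N+2}, a_1,…,a_{N+2}, b_1,…,b_{N+2} be real numbers with λ_j ≠ 0 for 1 ≤ j ≤ N−2. Define R₃ = λ_{N+1}² · Δ_{N+1}[N−1, N; N, N+1] · Δ_{N+1}[N, N+1; 1, 2] − λ_{N−1}² · Δ_{N−1} · Δ_{N+1}[N−1, N; 1, 2]. Then R₃ = (1/(λ₁² λ₂² ⋯ λ_{N−2}²)) · Δ_{N+2}[N, N+2; 1, 2] · Δ_{N+1}[N−1, N, N+1; 1, 2, 3]. -/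
open Matrix

lemma aux1 {R : Type*} [CommRing R] (m : ℕ) (w : Fin (m+1) → R) :
    Matrix.det (Matrix.of fun r c : Fin (m+1) =>
      if c = Fin.last m then w r else if (r : ℕ) = (c : ℕ) then 1 else 0)
    = w (Fin.last m) := by
  rw [det_of_upperTriangular]
  · rw [Fin.prod_univ_castSucc]
    have h1 : ∀ i : Fin m, (Matrix.of fun r c : Fin (m+1) =>
        if c = Fin.last m then w r else if (r : ℕ) = (c : ℕ) then 1 else 0)
        i.castSucc i.castSucc = 1 := by
      intro i
      simp [Fin.ext_iff, (Fin.castSucc_lt_last i).ne, i.isLt.ne]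
    simp only [h1]
    simp
  · intro i j hij
    simp only [Matrix.of_apply, id] at hij ⊢
    rw [if_neg, if_neg]
    · omega
    · intro h; rw [h] at hij; exact absurd hij (not_lt.2 (Fin.le_last i))

lemma aux2 {R : Type*} [CommRing R] (m : ℕ) (w : Fin (m+1) → R) :
    Matrix.det (Matrix.of fun r c : Fin (m+1) =>
      if c = Fin.last m then w r else if (r : ℕ) = (c : ℕ) + 1 then 1 else 0)
    = (-1) ^ m * w 0 := by
  rw [det_succ_row_zero]
  have hz : ∀ j : Fin (m+1), j ≠ Fin.last m → (Matrix.of fun r c : Fin (m+1) =>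
      if c = Fin.last m then w r else if (r : ℕ) = (c : ℕ) + 1 then 1 else 0) 0 j = 0 := by
    intro j hj; simp [hj]
  rw [Finset.sum_eq_single (Fin.last m)]
  · have : ((Matrix.of fun r c : Fin (m+1) =>
        if c = Fin.last m then w r else if (r : ℕ) = (c : ℕ) + 1 then 1 else 0).submatrix
        Fin.succ (Fin.last m).succAbove) = 1 := by
      ext r c
      simp only [submatrix_apply, Matrix.of_apply, Fin.succAbove_last, one_apply]
      rw [if_neg (by simp [Fin.ext_iff]; omega)]
      by_cases h : r = c
      · simp [h]
      · rw [if_neg, if_neg h]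
        simp only [Fin.val_succ, Fin.coe_castSucc]
        simp only [Fin.ext_iff] at h
        omega
    rw [this, det_one, mul_one, Matrix.of_apply, if_pos rfl]
    simp [Fin.val_last]
  · intro j _ hj
    rw [hz j hj, mul_zero, zero_mul]
  · simp

lemma L1 {R : Type*} [CommRing R] (n : ℕ) (u v : Fin (n+2) → R) :
    Matrix.det (Matrix.of fun j c : Fin (n+2) =>
      if c = 0 then u j else if c = Fin.last (n+1) then v j else if j = c then 1 else 0)
    = u 0 * v (Fin.last (n+1)) - u (Fin.last (n+1)) * v 0 := by
  set Z : Matrix (Fin (n+2)) (Fin (n+2)) R := Matrix.of fun j c : Fin (n+2) =>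
      if c = 0 then u j else if c = Fin.last (n+1) then v j else if j = c then 1 else 0 with hZ
  rw [det_succ_column_zero]
  rw [Finset.sum_eq_add_of_mem 0 (Fin.last (n+1)) (Finset.mem_univ _) (Finset.mem_univ _)
    (by simp [Fin.ext_iff])]
  · have e0 : Z.submatrix (Fin.succAbove 0) Fin.succ = Matrix.of fun r c : Fin (n+1) =>
        if c = Fin.last n then v r.succ else if (r : ℕ) = (c : ℕ) then 1 else 0 := by
      ext r c
      simp only [hZ, submatrix_apply, Matrix.of_apply, Fin.succAbove_zero]
      rw [if_neg (Fin.succ_ne_zero _)]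
      by_cases h : c = Fin.last n
      · rw [if_pos (by simp [h, Fin.ext_iff]), if_pos h]
      · rw [if_neg (by simp only [Fin.ext_iff, Fin.val_succ, Fin.val_last] at h ⊢; omega),
          if_neg h]
        by_cases h2 : (r : ℕ) = (c : ℕ)
        · rw [if_pos (by simp [Fin.ext_iff, h2]), if_pos h2]
        · rw [if_neg (by simp [Fin.ext_iff]; omega), if_neg h2]
    have el : Z.submatrix (Fin.succAbove (Fin.last (n+1))) Fin.succ =
        Matrix.of fun r c : Fin (n+1) =>
        if c = Fin.last n then v r.castSucc else if (r : ℕ) = (c : ℕ) + 1 then 1 else 0 := by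
      ext r c
      simp only [hZ, submatrix_apply, Matrix.of_apply, Fin.succAbove_last]
      rw [if_neg (Fin.succ_ne_zero _)]
      by_cases h : c = Fin.last n
      · rw [if_pos (by simp [h, Fin.ext_iff]), if_pos h]
      · rw [if_neg (by simp only [Fin.ext_iff, Fin.val_succ, Fin.val_last] at h ⊢; omega),
          if_neg h]
        by_cases h2 : (r : ℕ) = (c : ℕ) + 1
        · rw [if_pos (by simp [Fin.ext_iff, h2]), if_pos h2]
        · rw [if_neg (by simp [Fin.ext_iff]; omega), if_neg h2]
    rw [e0, el, aux1, aux2]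
    have h00 : Z 0 0 = u 0 := by simp [hZ]
    have hl0 : Z (Fin.last (n+1)) 0 = u (Fin.last (n+1)) := by simp [hZ]
    rw [h00, hl0, Fin.succ_last]
    simp only [Fin.val_zero, pow_zero, Fin.val_last, Fin.castSucc_zero]
    have hsq : ((-1:R))^n * ((-1:R))^n = 1 := by
      rw [← pow_add, ← two_mul, pow_mul]; norm_num
    ring_nf
    rw [show ((-1:R)) ^ (n * 2) = (-1:R)^n * (-1:R)^n from by rw [← pow_add]; ring_nf, hsq,
      mul_one]
  · intro i _ hi
    obtain ⟨hi0, hil⟩ := hi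
    have hi1 : 1 ≤ (i : ℕ) := by
      rcases Nat.eq_zero_or_pos (i : ℕ) with h | h
      · exact absurd (Fin.ext h) hi0
      · exact h
    have hin : (i : ℕ) < n + 1 := by
      rcases lt_or_eq_of_le (Nat.lt_succ_iff.mp i.isLt) with h | h
      · exact h
      · exact absurd (Fin.ext h) hil
    have : Matrix.det (Z.submatrix (Fin.succAbove i) Fin.succ) = 0 := by
      apply det_eq_zero_of_column_eq_zero (⟨(i : ℕ) - 1, by omega⟩ : Fin (n+1))
      intro r
      have hsucc : ((⟨(i : ℕ) - 1, by omega⟩ : Fin (n+1)).succ : Fin (n+2)) = i := by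
        simp [Fin.ext_iff]; omega
      simp only [submatrix_apply, hsucc, hZ, Matrix.of_apply]
      rw [if_neg hi0, if_neg hil, if_neg (Fin.succAbove_ne i r)]
    rw [this, mul_zero]

/-- inner matrix: delete last two rows and first & last columns -/
def innerM {R : Type*} [CommRing R] (n : ℕ) (M : Matrix (Fin (n+2)) (Fin (n+2)) R) :
    Matrix (Fin n) (Fin n) R :=
  M.submatrix (fun i : Fin n => i.castSucc.castSucc) (fun j : Fin n => j.succ.castSucc)

lemma L2 {R : Type*} [CommRing R] (n : ℕ) (M : Matrix (Fin (n+2)) (Fin (n+2)) R) :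
    Matrix.det (M * (Matrix.of fun j c : Fin (n+2) =>
      if c = 0 then adjugate M j ⟨n, by omega⟩
      else if c = Fin.last (n+1) then adjugate M j (Fin.last (n+1))
      else if j = c then 1 else 0))
    = (-1) ^ n * (M.det * (M.det * (innerM n M).det)) := by
  set p : Fin (n+2) := ⟨n, by omega⟩ with hp
  have hsa : ∀ r : Fin (n+1), ((p.succAbove r : Fin (n+2)) : ℕ)
      = if (r : ℕ) < n then (r : ℕ) else (r : ℕ) + 1 := by
    intro r
    by_cases h : (r : ℕ) < n
    · rw [Fin.succAbove, if_pos (by simp [Fin.lt_def, hp, h]), if_pos h]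
      simp
    · rw [Fin.succAbove, if_neg (by simp [Fin.lt_def, hp, h]), if_neg h]
      simp
  set W : Matrix (Fin (n+2)) (Fin (n+2)) R := Matrix.of fun i c : Fin (n+2) =>
        if c = 0 then M.det * (if i = p then 1 else 0)
        else if c = Fin.last (n+1) then M.det * (if i = Fin.last (n+1) then 1 else 0)
        else M i c with hW
  have hMZ : M * (Matrix.of fun j c : Fin (n+2) =>
      if c = 0 then adjugate M j p
      else if c = Fin.last (n+1) then adjugate M j (Fin.last (n+1))
      else if j = c then 1 else 0) = W := by
    ext i c
    rw [mul_apply]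
    rcases eq_or_ne c 0 with h0 | h0
    · subst h0
      have h := congrFun (congrFun (mul_adjugate M) i) p
      rw [mul_apply] at h
      simp only [Matrix.smul_apply, Matrix.one_apply, smul_eq_mul] at h
      simpa [hW] using h
    · rcases eq_or_ne c (Fin.last (n+1)) with hl | hl
      · subst hl
        have h := congrFun (congrFun (mul_adjugate M) i) (Fin.last (n+1))
        rw [mul_apply] at h
        simp only [Matrix.smul_apply, Matrix.one_apply, smul_eq_mul] at h
        simpa [hW, h0] using h
      · simp [hW, h0, hl, mul_ite]
  rw [hMZ, det_succ_column_zero, Finset.sum_eq_single p]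
  · have hcol0 : W p 0 = M.det := by simp [hW]
    rw [hcol0]
    set B := W.submatrix p.succAbove Fin.succ with hB
    have hBdet : B.det = M.det * (innerM n M).det := by
      rw [det_succ_column B (Fin.last n), Finset.sum_eq_single (Fin.last n)]
      · have hBl : B (Fin.last n) (Fin.last n) = M.det := by
          simp only [hB, hW, submatrix_apply, Matrix.of_apply]
          rw [if_neg (Fin.succ_ne_zero _),
            if_pos (show Fin.succ (Fin.last n) = Fin.last (n+1) by simp [Fin.ext_iff]),
            if_pos (show p.succAbove (Fin.last n) = Fin.last (n+1) by
              rw [Fin.ext_iff]; rw [hsa]; simp), mul_one]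
        have hsub : B.submatrix (Fin.last n).succAbove (Fin.last n).succAbove = innerM n M := by
          ext r c
          simp only [hB, hW, innerM, submatrix_apply, Matrix.of_apply, Fin.succAbove_last]
          rw [if_neg (Fin.succ_ne_zero _),
            if_neg (show ¬ Fin.succ (Fin.castSucc c) = Fin.last (n+1) by
              have := c.isLt; simp [Fin.ext_iff]; omega)]
          have e1 : p.succAbove r.castSucc = r.castSucc.castSucc := by
            rw [Fin.ext_iff, hsa]
            have := r.isLt
            simp [this]
          have e2 : r.castSucc.castSucc = (r.castSucc.castSucc : Fin (n+2)) := rfl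
          have e3 : (c.castSucc.succ : Fin (n+2)) = c.succ.castSucc := by
            rw [Fin.ext_iff]; simp
          rw [e1, e3]
        rw [hBl, hsub]
        have hone : ((-1 : R)) ^ ((Fin.last n : ℕ) + (Fin.last n : ℕ)) = 1 := by
          simp only [Fin.val_last, ← two_mul, pow_mul]
          norm_num
        rw [hone, one_mul]
      · intro i _ hi
        have : B i (Fin.last n) = 0 := by
          simp only [hB, hW, submatrix_apply, Matrix.of_apply]
          rw [if_neg (Fin.succ_ne_zero _),
            if_pos (show Fin.succ (Fin.last n) = Fin.last (n+1) by simp [Fin.ext_iff]),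
            if_neg (show ¬ p.succAbove i = Fin.last (n+1) by
              rw [Fin.ext_iff, hsa]
              have h1 := i.isLt
              have hi' : (i : ℕ) ≠ n := fun h => hi (Fin.ext (by simpa using h))
              simp only [Fin.val_last]
              split <;> omega), mul_zero]
        rw [this, mul_zero, zero_mul]
      · simp
    rw [hBdet, hp]
    ring
  · intro i _ hi
    have : W i 0 = 0 := by simp [hW, hi]
    rw [this, mul_zero, zero_mul]
  · simp

lemma dj_generic (n : ℕ) :
    (let A : Matrix (Fin (n+2)) (Fin (n+2)) (MvPolynomial (Fin (n+2) × Fin (n+2)) ℤ) :=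
      mvPolynomialX (Fin (n+2)) (Fin (n+2)) ℤ
    (A.submatrix (Fin.succAbove ⟨n, by omega⟩) (Fin.succAbove 0)).det *
      (A.submatrix (Fin.succAbove (Fin.last (n+1))) (Fin.succAbove (Fin.last (n+1)))).det
    - (A.submatrix (Fin.succAbove ⟨n, by omega⟩) (Fin.succAbove (Fin.last (n+1)))).det *
      (A.submatrix (Fin.succAbove (Fin.last (n+1))) (Fin.succAbove 0)).det
    = A.det * (innerM n A).det) := by
  intro A
  set p : Fin (n+2) := ⟨n, by omega⟩ with hp
  have h2 : A.det * Matrix.det (Matrix.of fun j c : Fin (n+2) =>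
      if c = 0 then adjugate A j p
      else if c = Fin.last (n+1) then adjugate A j (Fin.last (n+1))
      else if j = c then 1 else 0) = (-1) ^ n * (A.det * (A.det * (innerM n A).det)) := by
    rw [← det_mul, L2]
  have hA : A.det ≠ 0 := det_mvPolynomialX_ne_zero _ ℤ
  have h3 : Matrix.det (Matrix.of fun j c : Fin (n+2) =>
      if c = 0 then adjugate A j p
      else if c = Fin.last (n+1) then adjugate A j (Fin.last (n+1))
      else if j = c then 1 else 0) = (-1) ^ n * (A.det * (innerM n A).det) := by
    apply mul_left_cancel₀ hA
    rw [h2]; ring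
  rw [L1] at h3
  rw [adjugate_fin_succ_eq_det_submatrix, adjugate_fin_succ_eq_det_submatrix,
    adjugate_fin_succ_eq_det_submatrix, adjugate_fin_succ_eq_det_submatrix] at h3
  have hpv : ((p : Fin (n+2)) : ℕ) = n := rfl
  simp only [hpv, Fin.val_last, Fin.val_zero] at h3
  have E : ∀ e : ℕ, Even e → ((-1 : MvPolynomial (Fin (n+2) × Fin (n+2)) ℤ))^e = 1 :=
    fun e he => he.neg_one_pow
  have O : ∀ e : ℕ, Odd e → ((-1 : MvPolynomial (Fin (n+2) × Fin (n+2)) ℤ))^e = -1 :=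
    fun e he => he.neg_one_pow
  rcases Nat.even_or_odd n with hpar | hpar
  · obtain ⟨m, hm⟩ := hpar
    rw [E (n+0) ⟨m, by omega⟩, E (n+1+(n+1)) ⟨n+1, by omega⟩, O (n+(n+1)) ⟨n, by omega⟩,
      O (n+1+0) ⟨m, by omega⟩, E n ⟨m, hm⟩] at h3
    linear_combination h3
  · obtain ⟨m, hm⟩ := hpar
    rw [O (n+0) ⟨m, by omega⟩, E (n+1+(n+1)) ⟨n+1, by omega⟩, O (n+(n+1)) ⟨n, by omega⟩,
      E (n+1+0) ⟨m+1, by omega⟩, O n ⟨m, hm⟩] at h3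
    linear_combination -h3

lemma dj {α : Type*} [CommRing α] (n : ℕ) (M : Matrix (Fin (n+2)) (Fin (n+2)) α) :
    (M.submatrix (Fin.succAbove ⟨n, by omega⟩) (Fin.succAbove 0)).det *
      (M.submatrix (Fin.succAbove (Fin.last (n+1))) (Fin.succAbove (Fin.last (n+1)))).det
    - (M.submatrix (Fin.succAbove ⟨n, by omega⟩) (Fin.succAbove (Fin.last (n+1)))).det *
      (M.submatrix (Fin.succAbove (Fin.last (n+1))) (Fin.succAbove 0)).det
    = M.det * (innerM n M).det := by
  have key := dj_generic n
  set A := mvPolynomialX (Fin (n+2)) (Fin (n+2)) ℤ with hA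
  let φ := MvPolynomial.aeval (R := ℤ) (fun q : Fin (n+2) × Fin (n+2) => M q.1 q.2)
  have happ := congrArg φ key
  have hmap : φ.mapMatrix A = M := mvPolynomialX_mapMatrix_aeval ℤ M
  simp only [map_sub, _root_.map_mul, AlgHom.map_det] at happ
  simp only [AlgHom.mapMatrix_apply] at happ hmap
  simp only [innerM, ← Matrix.submatrix_map, hmap] at happ
  simpa [innerM] using happ

lemma colEntry_shift (lam a b : ℕ → ℝ) (j c : ℕ) :
    colEntry lam a b j (c + 3) = lam j ^ 2 * colEntry lam a b j c := by
  unfold colEntry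
  have h1 : (c + 3) % 3 = c % 3 := by omega
  have h2 : (c + 3) / 3 = c / 3 + 1 := by omega
  rw [h1, h2]
  split_ifs <;> ring

/-- For `N = 3k+2`, `k ≥ 1`, with `λ_j ≠ 0` for `1 ≤ j ≤ N-2`:
`R₃ = λ_{N+1}² Δ_{N+1}[N-1,N; N,N+1] Δ_{N+1}[N,N+1; 1,2]
      - λ_{N-1}² Δ_{N-1} Δ_{N+1}[N-1,N; 1,2]`
equals `(λ₁²⋯λ_{N-2}²)⁻¹ Δ_{N+2}[N,N+2; 1,2] Δ_{N+1}[N-1,N,N+1; 1,2,3]`. -/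
theorem stmt14 (k : ℕ) (hk : 1 ≤ k) (lam a b : ℕ → ℝ)
    (hlam : ∀ j : ℕ, 1 ≤ j → j ≤ 3 * k → lam j ≠ 0) :
    lam (3 * k + 3) ^ 2 *
        -- Δ_{N+1}[N-1, N; N, N+1]
        (Matrix.det (Matrix.of fun i c : Fin (3 * k + 1) =>
          colEntry lam a b ((if i.1 < 3 * k then i.1 else i.1 + 2) + 1) c.1)) *
        -- Δ_{N+1}[N, N+1; 1, 2]
        (Matrix.det (Matrix.of fun i c : Fin (3 * k + 1) =>
          colEntry lam a b (i.1 + 1) (c.1 + 2)))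
      - lam (3 * k + 1) ^ 2 * Dlt lam a b (3 * k + 1) *
        -- Δ_{N+1}[N-1, N; 1, 2]
        (Matrix.det (Matrix.of fun i c : Fin (3 * k + 1) =>
          colEntry lam a b ((if i.1 < 3 * k then i.1 else i.1 + 2) + 1) (c.1 + 2)))
    = (1 / ∏ j ∈ Finset.Icc 1 (3 * k), lam j ^ 2) *
        -- Δ_{N+2}[N, N+2; 1, 2]
        (Matrix.det (Matrix.of fun i c : Fin (3 * k + 2) =>
          colEntry lam a b ((if i.1 < 3 * k + 1 then i.1 else i.1 + 1) + 1) (c.1 + 2))) *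
        -- Δ_{N+1}[N-1, N, N+1; 1, 2, 3]
        (Matrix.det (Matrix.of fun i c : Fin (3 * k) =>
          colEntry lam a b (i.1 + 1) (c.1 + 3))) := by
  set M₀ : Matrix (Fin (3*k+2)) (Fin (3*k+2)) ℝ := Matrix.of fun i c : Fin (3*k+2) =>
    colEntry lam a b ((if i.1 < 3*k+1 then i.1 else i.1+1)+1) (c.1+2) with hM0
  set p : Fin (3*k+2) := ⟨3*k, by omega⟩ with hp
  have hsa : ∀ r : Fin (3*k+1), ((p.succAbove r : Fin (3*k+2)) : ℕ)
      = if (r : ℕ) < 3*k then (r : ℕ) else (r : ℕ) + 1 := by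
    intro r
    by_cases h : (r : ℕ) < 3*k
    · rw [Fin.succAbove, if_pos (by simp [Fin.lt_def, hp, h]), if_pos h]
      simp
    · rw [Fin.succAbove, if_neg (by simp [Fin.lt_def, hp, h]), if_neg h]
      simp
  have hdj := dj (3*k) M₀
  -- T2
  have hA2 : (M₀.submatrix (Fin.last (3*k+1)).succAbove (Fin.last (3*k+1)).succAbove).det
      = Matrix.det (Matrix.of fun i c : Fin (3*k+1) => colEntry lam a b (i.1+1) (c.1+2)) := by
    congr 1
    ext i c
    simp only [hM0, submatrix_apply, Fin.succAbove_last, Matrix.of_apply, Fin.coe_castSucc]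
    rw [if_pos i.isLt]
  -- T3
  have hA3 : (M₀.submatrix p.succAbove (Fin.last (3*k+1)).succAbove).det
      = Matrix.det (Matrix.of fun i c : Fin (3*k+1) =>
          colEntry lam a b ((if i.1 < 3*k then i.1 else i.1+2)+1) (c.1+2)) := by
    congr 1
    ext i c
    simp only [hM0, submatrix_apply, Fin.succAbove_last, Matrix.of_apply, Fin.coe_castSucc]
    congr 2
    rw [hsa]
    have := i.isLt
    split_ifs <;> omega
  -- A1
  have hA1 : (M₀.submatrix p.succAbove (Fin.succAbove 0)).det
      = (∏ i : Fin (3*k+1), lam ((if (i : ℕ) < 3*k then (i : ℕ) else (i : ℕ)+2)+1) ^ 2) *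
        Matrix.det (Matrix.of fun i c : Fin (3*k+1) =>
          colEntry lam a b ((if i.1 < 3*k then i.1 else i.1+2)+1) c.1) := by
    rw [show M₀.submatrix p.succAbove (Fin.succAbove 0)
        = Matrix.of (fun i j : Fin (3*k+1) =>
            (fun r : Fin (3*k+1) => lam ((if (r : ℕ) < 3*k then (r : ℕ) else (r : ℕ)+2)+1) ^ 2) i *
            (Matrix.of fun i c : Fin (3*k+1) =>
              colEntry lam a b ((if i.1 < 3*k then i.1 else i.1+2)+1) c.1) i j) from ?_,
      det_mul_column]
    ext i c
    simp only [hM0, submatrix_apply, Fin.succAbove_zero, Matrix.of_apply, Fin.val_succ]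
    rw [show (c : ℕ) + 1 + 2 = (c : ℕ) + 3 from by omega, colEntry_shift]
    have hrow : (if ((p.succAbove i : Fin (3*k+2)) : ℕ) < 3 * k + 1 then ((p.succAbove i : Fin (3*k+2)) : ℕ)
        else ((p.succAbove i : Fin (3*k+2)) : ℕ) + 1) + 1 = (if (i : ℕ) < 3 * k then (i : ℕ) else (i : ℕ) + 2) + 1 := by
      rw [hsa]
      have := i.isLt
      split_ifs <;> omega
    rw [hrow]
  -- A4
  have hA4 : (M₀.submatrix (Fin.last (3*k+1)).succAbove (Fin.succAbove 0)).det
      = (∏ i : Fin (3*k+1), lam ((i : ℕ)+1) ^ 2) * Dlt lam a b (3*k+1) := by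
    rw [show M₀.submatrix (Fin.last (3*k+1)).succAbove (Fin.succAbove 0)
        = Matrix.of (fun i j : Fin (3*k+1) =>
            (fun r : Fin (3*k+1) => lam ((r : ℕ)+1) ^ 2) i *
            (Matrix.of fun i c : Fin (3*k+1) => colEntry lam a b (i.1+1) c.1) i j) from ?_,
      det_mul_column, Dlt]
    ext i c
    simp only [hM0, submatrix_apply, Fin.succAbove_last, Fin.succAbove_zero, Matrix.of_apply,
      Fin.coe_castSucc, Fin.val_succ]
    rw [if_pos i.isLt, show (c : ℕ) + 1 + 2 = (c : ℕ) + 3 from by omega, colEntry_shift]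
  -- inner
  have hInner : (innerM (3*k) M₀).det
      = Matrix.det (Matrix.of fun i c : Fin (3*k) => colEntry lam a b (i.1+1) (c.1+3)) := by
    congr 1
    ext i c
    simp only [innerM, hM0, submatrix_apply, Matrix.of_apply, Fin.coe_castSucc, Fin.val_succ]
    rw [if_pos (by have := i.isLt; omega : ((i : ℕ) : ℕ) < 3*k+1)]
  rw [hA1, hA2, hA3, hA4, hInner] at hdj
  -- products
  have hprod1 : (∏ i : Fin (3*k+1), lam ((if (i : ℕ) < 3*k then (i : ℕ) else (i : ℕ)+2)+1) ^ 2)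
      = (∏ i : Fin (3*k), lam ((i : ℕ)+1) ^ 2) * lam (3*k+3) ^ 2 := by
    rw [Fin.prod_univ_castSucc]
    congr 1
    · exact Finset.prod_congr rfl fun i _ => by
        rw [Fin.coe_castSucc, if_pos i.isLt]
    · rw [Fin.val_last, if_neg (by omega)]
  have hprod2 : (∏ i : Fin (3*k+1), lam ((i : ℕ)+1) ^ 2)
      = (∏ i : Fin (3*k), lam ((i : ℕ)+1) ^ 2) * lam (3*k+1) ^ 2 := by
    rw [Fin.prod_univ_castSucc]
    simp
  have hIcc : ∀ m : ℕ, (∏ j ∈ Finset.Icc 1 m, lam j ^ 2) = ∏ i ∈ Finset.range m, lam (i+1) ^ 2 := by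
    intro m
    induction m with
    | zero => simp
    | succ m ih => rw [Finset.prod_Icc_succ_top (by omega), ih, Finset.prod_range_succ]
  have hP : (∏ j ∈ Finset.Icc 1 (3*k), lam j ^ 2) = ∏ i : Fin (3*k), lam ((i : ℕ)+1) ^ 2 := by
    rw [hIcc, Fin.prod_univ_eq_prod_range (fun i => lam (i+1) ^ 2) (3*k)]
  have hPne : (∏ i : Fin (3*k), lam ((i : ℕ)+1) ^ 2) ≠ 0 :=
    Finset.prod_ne_zero_iff.2 fun i _ =>
      pow_ne_zero _ (hlam ((i : ℕ)+1) (by omega) (by have := i.isLt; omega))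
  rw [hprod1, hprod2] at hdj
  rw [hP]
  set Pk := ∏ i : Fin (3*k), lam ((i : ℕ)+1) ^ 2 with hPk
  have hM0det : M₀.det = Matrix.det (Matrix.of fun i c : Fin (3*k+2) =>
      colEntry lam a b ((if i.1 < 3*k+1 then i.1 else i.1+1)+1) (c.1+2)) := rfl
  rw [hM0det] at hdj
  field_simp
  linear_combination hdj
end

section
/- Let q, u : ℝ×ℝ → ℝ be smooth functions of (y,τ) with q nowhere zero. Then the zero-curvature equation F₁(λ)_τ − G₁(λ)_y + F₁(λ)G₁(λ) − G₁(λ)F₁(λ) = 0 holds for every real λ ≠ 0 if and only if (q,u) satisfies the associated Degasperis–Procesi (aDP) equation: q_τ = −u_y q² and u − q³ − q (u_y q)_y = 0. -/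
set_option maxHeartbeats 1000000

open Matrix

/-- The aDP Lax matrix `F₁(λ)`. -/
noncomputable def F1lax (q : ℝ → ℝ → ℝ) (l y τ : ℝ) : Matrix (Fin 3) (Fin 3) ℝ :=
  !![0, l * q y τ ^ 2, 1 / q y τ;
     0, 0, l / q y τ;
     1 / q y τ, 0, 0]

/-- The aDP Lax matrix `G₁(λ)`. -/
noncomputable def G1lax (q u : ℝ → ℝ → ℝ) (l y τ : ℝ) : Matrix (Fin 3) (Fin 3) ℝ :=
  !![-(pdx u y τ * q y τ), pdx u y τ * q y τ / l, u y τ;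
     1 / l, pdx u y τ * q y τ - 1 / l ^ 2, 0;
     0, u y τ / l, 0]

/-- The associated Degasperis–Procesi (aDP) equation. -/
def ADPeq (q u : ℝ → ℝ → ℝ) : Prop :=
  ∀ y τ : ℝ,
    pdt q y τ = -(pdx u y τ * q y τ ^ 2) ∧
    u y τ - q y τ ^ 3 - q y τ * pdx (fun y' τ' => pdx u y' τ' * q y' τ') y τ = 0

lemma hasDerivAt_pdx' {f : ℝ → ℝ → ℝ} (hf : Smooth2 f) (y τ : ℝ) :
    HasDerivAt (fun y' => f y' τ) (pdx f y τ) y := by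
  have h : DifferentiableAt ℝ (fun y' => f y' τ) y := by
    have : (fun y' => f y' τ) = (Function.uncurry f) ∘ (fun y' => (y', τ)) := rfl
    rw [this]
    exact ((hf.differentiable (by simp)).comp
      (differentiable_id.prodMk (differentiable_const τ))).differentiableAt
  exact h.hasDerivAt

lemma hasDerivAt_pdt' {f : ℝ → ℝ → ℝ} (hf : Smooth2 f) (y τ : ℝ) :
    HasDerivAt (fun τ' => f y τ') (pdt f y τ) τ := by
  have h : DifferentiableAt ℝ (fun τ' => f y τ') τ := by
    have : (fun τ' => f y τ') = (Function.uncurry f) ∘ (fun τ' => (y, τ')) := rfl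
    rw [this]
    exact ((hf.differentiable (by simp)).comp
      ((differentiable_const y).prodMk differentiable_id)).differentiableAt
  exact h.hasDerivAt

lemma Fderiv_eq (q : ℝ → ℝ → ℝ) (hq : Smooth2 q) (hq0 : ∀ y τ : ℝ, q y τ ≠ 0) (l y τ : ℝ) :
    (Matrix.of fun i j : Fin 3 => pdt (fun y' τ' => F1lax q l y' τ' i j) y τ) =
    !![0, l * (2 * q y τ ^ 1 * pdt q y τ), (0 * q y τ - 1 * pdt q y τ) / q y τ ^ 2;
       0, 0, (0 * q y τ - l * pdt q y τ) / q y τ ^ 2;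
       (0 * q y τ - 1 * pdt q y τ) / q y τ ^ 2, 0, 0] := by
  have hqt := hasDerivAt_pdt' hq y τ
  ext i j
  fin_cases i <;> fin_cases j
  · exact (hasDerivAt_const τ (0:ℝ)).deriv
  · exact ((hqt.pow 2).const_mul l).deriv
  · exact ((hasDerivAt_const τ (1:ℝ)).div hqt (hq0 y τ)).deriv
  · exact (hasDerivAt_const τ (0:ℝ)).deriv
  · exact (hasDerivAt_const τ (0:ℝ)).deriv
  · exact ((hasDerivAt_const τ l).div hqt (hq0 y τ)).deriv
  · exact ((hasDerivAt_const τ (1:ℝ)).div hqt (hq0 y τ)).deriv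
  · exact (hasDerivAt_const τ (0:ℝ)).deriv
  · exact (hasDerivAt_const τ (0:ℝ)).deriv

lemma Gderiv_eq (q u : ℝ → ℝ → ℝ) (hq : Smooth2 q) (hu : Smooth2 u) (l y τ : ℝ) :
    (Matrix.of fun i j : Fin 3 => pdx (fun y' τ' => G1lax q u l y' τ' i j) y τ) =
    !![-(pdx (fun y' τ' => pdx u y' τ' * q y' τ') y τ),
         pdx (fun y' τ' => pdx u y' τ' * q y' τ') y τ / l, pdx u y τ;
       0, pdx (fun y' τ' => pdx u y' τ' * q y' τ') y τ, 0;
       0, pdx u y τ / l, 0] := by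
  have hP : Smooth2 (fun a b => pdx u a b * q a b) := ContDiff.mul (smooth2_pdx hu) hq
  have hPx := hasDerivAt_pdx' hP y τ
  have hux := hasDerivAt_pdx' hu y τ
  ext i j
  fin_cases i <;> fin_cases j
  · exact hPx.neg.deriv
  · exact (hPx.div_const l).deriv
  · exact hux.deriv
  · exact (hasDerivAt_const y (1/l)).deriv
  · exact (hPx.sub_const (1/l^2)).deriv
  · exact (hasDerivAt_const y (0:ℝ)).deriv
  · exact (hasDerivAt_const y (0:ℝ)).deriv
  · exact (hux.div_const l).deriv
  · exact (hasDerivAt_const y (0:ℝ)).deriv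

/-- The zero-curvature equation `F₁_τ - G₁_y + F₁G₁ - G₁F₁ = 0` holds for all `λ ≠ 0`
iff `(q, u)` solves the aDP equation. -/
theorem stmt15 (q u : ℝ → ℝ → ℝ) (hq : Smooth2 q) (hu : Smooth2 u)
    (hq0 : ∀ y τ : ℝ, q y τ ≠ 0) :
    (∀ l : ℝ, l ≠ 0 → ∀ y τ : ℝ,
      (Matrix.of fun i j : Fin 3 => pdt (fun y' τ' => F1lax q l y' τ' i j) y τ)
        - (Matrix.of fun i j : Fin 3 => pdx (fun y' τ' => G1lax q u l y' τ' i j) y τ)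
        + F1lax q l y τ * G1lax q u l y τ - G1lax q u l y τ * F1lax q l y τ = 0)
    ↔ ADPeq q u := by
  constructor
  · intro h y τ
    have h1 := h 1 one_ne_zero y τ
    rw [Fderiv_eq q hq hq0 1 y τ, Gderiv_eq q u hq hu 1 y τ] at h1
    have e02 := Matrix.ext_iff.mpr h1 0 2
    have e00 := Matrix.ext_iff.mpr h1 0 0
    simp [F1lax, G1lax, Matrix.mul_apply, Fin.sum_univ_three] at e02 e00
    constructor
    · field_simp [hq0 y τ] at e02 ⊢ <;> linarith
    · field_simp [hq0 y τ] at e00 ⊢ <;> linarith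
  · intro had l hl y τ
    obtain ⟨h1, h2⟩ := had y τ
    have hPx : pdx (fun y' τ' => pdx u y' τ' * q y' τ') y τ =
        (u y τ - q y τ ^ 3) / q y τ := by
      field_simp [hq0 y τ]
      linarith [h2]
    rw [Fderiv_eq q hq hq0 l y τ, Gderiv_eq q u hq hu l y τ]
    ext i j
    simp only [Matrix.sub_apply, Matrix.add_apply, Matrix.zero_apply, Matrix.mul_apply,
      Fin.sum_univ_three]
    fin_cases i <;> fin_cases j <;>
      simp [F1lax, G1lax, h1, hPx, Matrix.vecHead, Matrix.vecTail, Function.comp] <;>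
      field_simp [hq0 y τ, hl] <;> ring
end

section
/- Let q, u : ℝ×ℝ → ℝ be smooth functions of (y,τ) with q nowhere zero, let λ₁ ≠ 0, and let (g₁, g₂, g₃) be a smooth solution of the aDP Lax pair g_y = F₁(λ₁)g, g_τ = G₁(λ₁)g, with g₂ and g₃ nowhere zero. Set σ₁ = g₁/g₃, σ₂ = g₂/g₃, and ϑ = λ₁/σ₂, and assume λ₁² − 2λ₁σ₁σ₂ + σ₂² and ϑ² − 1 are nowhere zero. Define q₍₁₎ = −q(λ₁² − σ₂²)/(λ₁² − 2λ₁σ₁σ₂ + σ₂²). Then 1/q₍₁₎ = 1/q + 2ϑ_y/(ϑ² − 1). -/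
open Matrix

/-- `g` solves the aDP Lax pair at spectral parameter `λ`. -/
def SolvesADPLax (q u : ℝ → ℝ → ℝ) (l : ℝ) (g : ℝ → ℝ → Fin 3 → ℝ) : Prop :=
  (∀ i : Fin 3, Smooth2 (fun y τ => g y τ i)) ∧
  ∀ y τ : ℝ,
    (∀ i : Fin 3, deriv (fun y' => g y' τ i) y = ((F1lax q l y τ).mulVec (g y τ)) i) ∧
    (∀ i : Fin 3, deriv (fun τ' => g y τ' i) τ = ((G1lax q u l y τ).mulVec (g y τ)) i)

/-- The identity `1/q₍₁₎ = 1/q + 2ϑ_y/(ϑ² - 1)` for the aDP Darboux transformation. -/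
theorem stmt16 (q u : ℝ → ℝ → ℝ) (hq : Smooth2 q) (hu : Smooth2 u)
    (hq0 : ∀ y τ : ℝ, q y τ ≠ 0)
    (l1 : ℝ) (hl1 : l1 ≠ 0)
    (g : ℝ → ℝ → Fin 3 → ℝ) (hg : SolvesADPLax q u l1 g)
    (hg2 : ∀ y τ : ℝ, g y τ 1 ≠ 0) (hg3 : ∀ y τ : ℝ, g y τ 2 ≠ 0)
    (σ1 σ2 θ : ℝ → ℝ → ℝ)
    (hσ1 : ∀ y τ : ℝ, σ1 y τ = g y τ 0 / g y τ 2)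
    (hσ2 : ∀ y τ : ℝ, σ2 y τ = g y τ 1 / g y τ 2)
    (hθ : ∀ y τ : ℝ, θ y τ = l1 / σ2 y τ)
    (hden : ∀ y τ : ℝ, l1 ^ 2 - 2 * l1 * σ1 y τ * σ2 y τ + σ2 y τ ^ 2 ≠ 0)
    (hθ1 : ∀ y τ : ℝ, θ y τ ^ 2 - 1 ≠ 0)
    (q1 : ℝ → ℝ → ℝ)
    (hq1 : ∀ y τ : ℝ, q1 y τ =
      -(q y τ * (l1 ^ 2 - σ2 y τ ^ 2)) / (l1 ^ 2 - 2 * l1 * σ1 y τ * σ2 y τ + σ2 y τ ^ 2)) :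
    ∀ y τ : ℝ, 1 / q1 y τ = 1 / q y τ + 2 * pdx θ y τ / (θ y τ ^ 2 - 1) := by
  intro y τ
  obtain ⟨hsm, hlax⟩ := hg
  set a := g y τ 0 with ha
  set b := g y τ 1 with hb
  set c := g y τ 2 with hc
  have hbne : b ≠ 0 := hg2 y τ
  have hcne : c ≠ 0 := hg3 y τ
  have hqne : q y τ ≠ 0 := hq0 y τ
  have hdiff : ∀ i : Fin 3, DifferentiableAt ℝ (fun y' => g y' τ i) y := by
    intro i
    have h1 : Differentiable ℝ (Function.uncurry (fun y τ => g y τ i)) :=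
      (hsm i).differentiable (by simp)
    exact (h1.comp (differentiable_id.prodMk (differentiable_const τ))).differentiableAt
  have hdy := (hlax y τ).1
  have hb' : deriv (fun y' => g y' τ 1) y = l1 / q y τ * c := by
    have := hdy 1
    simpa [F1lax, Matrix.mulVec, dotProduct, Fin.sum_univ_three,
      div_eq_mul_inv, mul_comm] using this
  have hc' : deriv (fun y' => g y' τ 2) y = a / q y τ := by
    have := hdy 2
    simpa [F1lax, Matrix.mulVec, dotProduct, Fin.sum_univ_three,
      div_eq_mul_inv, mul_comm] using this
  have hθfun : (fun y' => θ y' τ) = fun y' => l1 * g y' τ 2 / g y' τ 1 := by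
    funext y'
    rw [hθ, hσ2]
    field_simp
  have hnum : HasDerivAt (fun y' => l1 * g y' τ 2) (l1 * (a / q y τ)) y := by
    have := ((hdiff 2).hasDerivAt).const_mul l1
    rwa [hc'] at this
  have hdenh : HasDerivAt (fun y' => g y' τ 1) (l1 / q y τ * c) y := by
    have := (hdiff 1).hasDerivAt
    rwa [hb'] at this
  have hθder : pdx θ y τ =
      (l1 * (a / q y τ) * b - l1 * c * (l1 / q y τ * c)) / b ^ 2 := by
    have := (hnum.div hdenh hbne).deriv
    rw [pdx, hθfun]; exact this
  have hth : θ y τ = l1 * c / b := by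
    rw [hθ, hσ2, ← hb, ← hc]; field_simp
  have h1 : l1 ^ 2 - (b / c) ^ 2 = (l1 ^ 2 * c ^ 2 - b ^ 2) / c ^ 2 := by
    field_simp
  have h2 : l1 ^ 2 - 2 * l1 * (a / c) * (b / c) + (b / c) ^ 2 =
      (l1 ^ 2 * c ^ 2 - 2 * l1 * a * b + b ^ 2) / c ^ 2 := by
    field_simp
  have hDabc : l1 ^ 2 * c ^ 2 - 2 * l1 * a * b + b ^ 2 ≠ 0 := by
    intro h
    apply hden y τ
    rw [hσ1, hσ2, h2, h, zero_div]
  have h3 : (l1 * c / b) ^ 2 - 1 = (l1 ^ 2 * c ^ 2 - b ^ 2) / b ^ 2 := by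
    field_simp
  have hE : l1 ^ 2 * c ^ 2 - b ^ 2 ≠ 0 := by
    intro h
    apply hθ1 y τ
    rw [hth, h3, h, zero_div]
  have h4 : (l1 * (a / q y τ) * b - l1 * c * (l1 / q y τ * c)) / b ^ 2 =
      (l1 * a * b - l1 ^ 2 * c ^ 2) / (q y τ * b ^ 2) := by
    field_simp
  rw [hq1, hθder, hth, hσ1, hσ2, h1, h2, h3, h4]
  field_simp
  ring
end

section
/- Let p, u : ℝ×ℝ → ℝ be smooth functions of (y,τ) with p nowhere zero, let λ₁ ≠ 0, and let (g₁, g₂, g₃) be a smooth solution of the aNovikov Lax pair g_y = F₂(λ₁)g, g_τ = G₂(λ₁)g, with g₂ and g₃ nowhere zero. Set σ₁ = g₁/g₃, σ₂ = g₂/g₃, and ϑ = σ₂²/2 − σ₁, and assume ϑ² − 1 > 0 everywhere. Define p₍₁₎ > 0 by p₍₁₎² = (4p²/σ₂⁴)(ϑ² − 1) and u₍₁₎ = −(p/p₍₁₎)(u + (2p²u_y − 2uσ₁)/σ₂² + 2/(λ₁σ₂)). Then 1/p₍₁₎² = 1/p² − ϑ_y/(ϑ² − 1) and u₍₁₎²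 = u² − ϑ_τ/(ϑ² − 1). -/
open Matrix

/-- The aNovikov Lax matrix `F₂(λ)`. -/
noncomputable def F2lax (p : ℝ → ℝ → ℝ) (l y τ : ℝ) : Matrix (Fin 3) (Fin 3) ℝ :=
  !![0, l * p y τ, 1 / p y τ ^ 2;
     0, 0, l * p y τ;
     1 / p y τ ^ 2, 0, 0]

/-- The aNovikov Lax matrix `G₂(λ)`. -/
noncomputable def G2lax (p u : ℝ → ℝ → ℝ) (l y τ : ℝ) : Matrix (Fin 3) (Fin 3) ℝ :=
  !![-(pdx u y τ * u y τ * p y τ ^ 2), pdx u y τ * p y τ ^ 2 / l,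
       u y τ ^ 2 + pdx u y τ ^ 2 * p y τ ^ 4;
     u y τ / l, -(1 / l ^ 2), -(pdx u y τ * p y τ ^ 2) / l;
     0, u y τ / l, pdx u y τ * u y τ * p y τ ^ 2]

/-- `g` solves the aNovikov Lax pair at spectral parameter `λ`. -/
def SolvesANovLax (p u : ℝ → ℝ → ℝ) (l : ℝ) (g : ℝ → ℝ → Fin 3 → ℝ) : Prop :=
  (∀ i : Fin 3, Smooth2 (fun y τ => g y τ i)) ∧
  ∀ y τ : ℝ,
    (∀ i : Fin 3, deriv (fun y' => g y' τ i) y = ((F2lax p l y τ).mulVec (g y τ)) i) ∧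
    (∀ i : Fin 3, deriv (fun τ' => g y τ' i) τ = ((G2lax p u l y τ).mulVec (g y τ)) i)

set_option maxHeartbeats 1600000 in
/-- The identities `1/p₁² = 1/p² - ϑ_y/(ϑ²-1)` and `u₁² = u² - ϑ_τ/(ϑ²-1)` for the
Darboux transformation of the aNovikov equation. -/
theorem stmt18 (p u : ℝ → ℝ → ℝ) (hp : Smooth2 p) (hu : Smooth2 u)
    (hp0 : ∀ y τ : ℝ, p y τ ≠ 0)
    (l1 : ℝ) (hl1 : l1 ≠ 0)
    (g : ℝ → ℝ → Fin 3 → ℝ) (hg : SolvesANovLax p u l1 g)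
    (hg2 : ∀ y τ : ℝ, g y τ 1 ≠ 0) (hg3 : ∀ y τ : ℝ, g y τ 2 ≠ 0)
    (σ1 σ2 θ : ℝ → ℝ → ℝ)
    (hσ1 : ∀ y τ : ℝ, σ1 y τ = g y τ 0 / g y τ 2)
    (hσ2 : ∀ y τ : ℝ, σ2 y τ = g y τ 1 / g y τ 2)
    (hθ : ∀ y τ : ℝ, θ y τ = σ2 y τ ^ 2 / 2 - σ1 y τ)
    (hθ1 : ∀ y τ : ℝ, 0 < θ y τ ^ 2 - 1)
    (p1 u1 : ℝ → ℝ → ℝ)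
    (hp1pos : ∀ y τ : ℝ, 0 < p1 y τ)
    (hp1 : ∀ y τ : ℝ, p1 y τ ^ 2 = 4 * p y τ ^ 2 / σ2 y τ ^ 4 * (θ y τ ^ 2 - 1))
    (hu1 : ∀ y τ : ℝ, u1 y τ = -(p y τ / p1 y τ) *
      (u y τ + (2 * p y τ ^ 2 * pdx u y τ - 2 * u y τ * σ1 y τ) / σ2 y τ ^ 2
        + 2 / (l1 * σ2 y τ))) :
    ∀ y τ : ℝ,
      1 / p1 y τ ^ 2 = 1 / p y τ ^ 2 - pdx θ y τ / (θ y τ ^ 2 - 1) ∧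
      u1 y τ ^ 2 = u y τ ^ 2 - pdt θ y τ / (θ y τ ^ 2 - 1) := by
  obtain ⟨hgsm, hglax⟩ := hg
  intro y τ
  have hdy : ∀ i : Fin 3, ∀ τ' : ℝ, Differentiable ℝ (fun z => g z τ' i) := by
    intro i τ'
    have h := (hgsm i).differentiable (by simp)
    exact h.comp (differentiable_id.prodMk (differentiable_const τ'))
  have hdt : ∀ i : Fin 3, ∀ y' : ℝ, Differentiable ℝ (fun z => g y' z i) := by
    intro i y'
    have h := (hgsm i).differentiable (by simp)
    exact h.comp ((differentiable_const y').prodMk differentiable_id)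
  have hpne := hp0 y τ
  have hbne := hg2 y τ
  have hcne := hg3 y τ
  -- spatial derivatives
  have Ha : HasDerivAt (fun z => g z τ 0)
      (l1 * p y τ * g y τ 1 + 1 / p y τ ^ 2 * g y τ 2) y := by
    have h := ((hdy 0 τ) y).hasDerivAt
    rw [(hglax y τ).1 0] at h
    refine h.congr_deriv ?_
    simp [F2lax, Matrix.mulVec, dotProduct, Fin.sum_univ_three]
  have Hb : HasDerivAt (fun z => g z τ 1) (l1 * p y τ * g y τ 2) y := by
    have h := ((hdy 1 τ) y).hasDerivAt
    rw [(hglax y τ).1 1] at h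
    refine h.congr_deriv ?_
    simp [F2lax, Matrix.mulVec, dotProduct, Fin.sum_univ_three]
  have Hc : HasDerivAt (fun z => g z τ 2) (1 / p y τ ^ 2 * g y τ 0) y := by
    have h := ((hdy 2 τ) y).hasDerivAt
    rw [(hglax y τ).1 2] at h
    refine h.congr_deriv ?_
    simp [F2lax, Matrix.mulVec, dotProduct, Fin.sum_univ_three]
  -- time derivatives
  have Ta : HasDerivAt (fun z => g y z 0)
      (-(pdx u y τ * u y τ * p y τ ^ 2) * g y τ 0 + pdx u y τ * p y τ ^ 2 / l1 * g y τ 1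
        + (u y τ ^ 2 + pdx u y τ ^ 2 * p y τ ^ 4) * g y τ 2) τ := by
    have h := ((hdt 0 y) τ).hasDerivAt
    rw [(hglax y τ).2 0] at h
    refine h.congr_deriv ?_
    simp [G2lax, Matrix.mulVec, dotProduct, Fin.sum_univ_three]
  have Tb : HasDerivAt (fun z => g y z 1)
      (u y τ / l1 * g y τ 0 + -(1 / l1 ^ 2) * g y τ 1
        + -(pdx u y τ * p y τ ^ 2) / l1 * g y τ 2) τ := by
    have h := ((hdt 1 y) τ).hasDerivAt
    rw [(hglax y τ).2 1] at h
    refine h.congr_deriv ?_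
    simp [G2lax, Matrix.mulVec, dotProduct, Fin.sum_univ_three]
  have Tc : HasDerivAt (fun z => g y z 2)
      (u y τ / l1 * g y τ 1 + pdx u y τ * u y τ * p y τ ^ 2 * g y τ 2) τ := by
    have h := ((hdt 2 y) τ).hasDerivAt
    rw [(hglax y τ).2 2] at h
    refine h.congr_deriv ?_
    simp [G2lax, Matrix.mulVec, dotProduct, Fin.sum_univ_three]
  have hθfy : (fun z => θ z τ) = fun z => (g z τ 1 / g z τ 2) ^ 2 / 2 - g z τ 0 / g z τ 2 := by
    funext z; rw [hθ, hσ1, hσ2]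
  have hθft : (fun z => θ y z) = fun z => (g y z 1 / g y z 2) ^ 2 / 2 - g y z 0 / g y z 2 := by
    funext z; rw [hθ, hσ1, hσ2]
  have Hθ := (((Hb.div Hc hcne).pow 2).div_const 2).sub (Ha.div Hc hcne)
  have Tθ := (((Tb.div Tc hcne).pow 2).div_const 2).sub (Ta.div Tc hcne)
  have hθy : deriv (fun z => (g z τ 1 / g z τ 2) ^ 2 / 2 - g z τ 0 / g z τ 2) y = _ := Hθ.deriv
  have hθt : deriv (fun z => (g y z 1 / g y z 2) ^ 2 / 2 - g y z 0 / g y z 2) τ = _ := Tθ.deriv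
  simp only [Pi.div_apply, Nat.cast_ofNat, show (2:ℕ) - 1 = 1 from rfl, pow_one] at hθy hθt
  have hpdx : pdx θ y τ = deriv (fun z => (g z τ 1 / g z τ 2) ^ 2 / 2 - g z τ 0 / g z τ 2) y := by
    unfold pdx; rw [hθfy]
  have hpdt : pdt θ y τ = deriv (fun z => (g y z 1 / g y z 2) ^ 2 / 2 - g y z 0 / g y z 2) τ := by
    unfold pdt; rw [hθft]
  have hD : θ y τ ^ 2 - 1 ≠ 0 := (hθ1 y τ).ne'
  have hp1ne := (hp1pos y τ).ne'
  have hθv : θ y τ = (g y τ 1 ^ 2 - 2 * g y τ 0 * g y τ 2) / (2 * g y τ 2 ^ 2) := by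
    rw [hθ, hσ1, hσ2]; field_simp
  constructor
  · rw [hpdx, hθy, hp1 y τ, hσ2]
    field_simp
    rw [hθv]
    field_simp
    ring
  · have hnum : (g y τ 1 ^ 2 - 2 * g y τ 0 * g y τ 2) ^ 2 - 4 * g y τ 2 ^ 4 ≠ 0 := by
      intro h
      apply hD
      rw [hθv]
      field_simp
      linear_combination h
    have hDX : θ y τ ^ 2 - 1
        = ((g y τ 1 ^ 2 - 2 * g y τ 0 * g y τ 2) ^ 2 - 4 * g y τ 2 ^ 4) / (4 * g y τ 2 ^ 4) := by
      rw [hθv]; field_simp; ring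
    have hp1c : p1 y τ ^ 2
        = p y τ ^ 2 * ((g y τ 1 ^ 2 - 2 * g y τ 0 * g y τ 2) ^ 2 - 4 * g y τ 2 ^ 4)
            / g y τ 1 ^ 4 := by
      rw [hp1 y τ, hσ2, hDX]; field_simp
    rw [hpdt, hθt, hu1 y τ, hσ1, hσ2]
    have e : ∀ x q A : ℝ, (-(x / q) * A) ^ 2 = x ^ 2 * A ^ 2 / q ^ 2 := by
      intro x q A; ring
    rw [e, hp1c, hDX]
    set N := (g y τ 1 ^ 2 - 2 * g y τ 0 * g y τ 2) ^ 2 - 4 * g y τ 2 ^ 4 with hN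
    field_simp [hnum]
    rw [hN]
    ring
end
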